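/- arXiv:2004.05924 — 6 statements merged into one kernel-verified Lean document; each statement's English description precedes it below -/
import Mathlib

section
/- Let p be a prime number and n a natural number. Then p does not divide the central binomial coefficient binomial(2n, n) if and only if every base-p digit d of n satisfies 2d ≤ p − 1. -/
private lemma mod_pow_succ_eq (p n i : ℕ) :
    n % p ^ (i + 1) = n % p ^ i + p ^ i * (n / p ^ i % p) := by
  rw [pow_succ]; exact Nat.mod_mul

/-- digits condition restated with explicit indices -/
private lemma digits_cond_iff (p : ℕ) (hp : 2 ≤ p) (n : ℕ) :
    (∀ d ∈ Nat.digits p n, 2 * d ≤ p - 1) ↔ ∀ i, 2 * (n / p ^ i % p) ≤ p - 1 := by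
  induction n using Nat.strong_induction_on with
  | _ n ih =>
    rcases Nat.eq_zero_or_pos n with rfl | hn
    · simp only [Nat.digits_zero, List.not_mem_nil, false_implies, implies_true, true_iff]
      intro i; simp only [Nat.zero_div, Nat.zero_mod, Nat.mul_zero]; omega
    · rw [Nat.digits_def' hp hn]
      simp only [List.mem_cons, forall_eq_or_imp]
      have hrec := ih (n / p) (Nat.div_lt_self hn (by omega))
      constructor
      · rintro ⟨h0, hrest⟩ i
        cases i with
        | zero => simpa using h0
        | succ i =>
          have := (hrec.mp hrest) i
          rwa [pow_succ', ← Nat.div_div_eq_div_mul]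
      · intro h
        refine ⟨by simpa using h 0, hrec.mpr fun i => ?_⟩
        have := h (i + 1)
        rwa [pow_succ', ← Nat.div_div_eq_div_mul] at this

private lemma no_carry_iff (p : ℕ) (hp : 2 ≤ p) (n : ℕ) :
    (∀ i, 2 * (n / p ^ i % p) ≤ p - 1) ↔ ∀ i, 2 * (n % p ^ (i + 1)) < p ^ (i + 1) := by
  constructor
  · intro h i
    induction i with
    | zero =>
      have := h 0
      simp only [pow_zero, Nat.div_one] at this
      have : n % p ^ 1 = n % p := by rw [pow_one]
      rw [this]
      have := h 0
      simp only [pow_zero, Nat.div_one] at this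
      have hlt : n % p < p := Nat.mod_lt _ (by omega)
      rw [pow_one]
      omega
    | succ i ihi =>
      have hd := h (i + 1)
      rw [mod_pow_succ_eq]
      have hpow : (0:ℕ) < p ^ (i + 1) := Nat.pow_pos (by omega)
      calc 2 * (n % p ^ (i + 1) + p ^ (i + 1) * (n / p ^ (i + 1) % p))
          = 2 * (n % p ^ (i + 1)) + p ^ (i + 1) * (2 * (n / p ^ (i + 1) % p)) := by ring
        _ < p ^ (i + 1) + p ^ (i + 1) * (p - 1) := by
            have : p ^ (i + 1) * (2 * (n / p ^ (i + 1) % p)) ≤ p ^ (i + 1) * (p - 1) :=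
              Nat.mul_le_mul_left _ hd
            omega
        _ = p ^ (i + 1) * (1 + (p - 1)) := by ring
        _ = p ^ (i + 1 + 1) := by rw [pow_succ]; congr 1; omega
  · intro h i
    have := h i
    rw [mod_pow_succ_eq] at this
    have hd : 2 * (n / p ^ i % p) < p := by
      by_contra hcon
      push_neg at hcon
      have : p ^ i * p ≤ p ^ i * (2 * (n / p ^ i % p)) := Nat.mul_le_mul_left _ hcon
      rw [pow_succ] at *
      nlinarith [Nat.zero_le (n % p ^ i)]
    omega

/-- **Kummer's theorem (central binomial version).** A prime `p` does not divide
`binomial(2n, n)` iff every base-`p` digit `d` of `n` satisfies `2 * d ≤ p - 1`. -/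
theorem kummer_central_binom (p n : ℕ) (hp : p.Prime) :
    ¬ p ∣ (2 * n).choose n ↔ ∀ d ∈ Nat.digits p n, 2 * d ≤ p - 1 := by
  have hp2 : 2 ≤ p := hp.two_le
  rw [digits_cond_iff p hp2 n, no_carry_iff p hp2 n]
  rcases Nat.eq_zero_or_pos n with rfl | hn
  · simp [hp.one_lt.ne']
    intro i
    have : (0:ℕ) < p ^ (i+1) := Nat.pow_pos (by omega)
    omega
  · set b := Nat.log p (2 * n) + 1 with hb
    have hlog : Nat.log p (2 * n) < b := by omega
    rw [← emultiplicity_eq_zero,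
      hp.emultiplicity_choose (by omega : n ≤ 2 * n) hlog]
    have h2 : 2 * n - n = n := by omega
    simp only [h2, Nat.cast_eq_zero, Finset.card_eq_zero, Finset.filter_eq_empty_iff,
      Finset.mem_Ico]
    constructor
    · intro h i
      by_cases hi : i + 1 < b
      · have := h (x := i + 1) ⟨by omega, hi⟩
        omega
      · have hbig : 2 * n < p ^ (i + 1) := by
          calc 2 * n < p ^ b := Nat.lt_pow_succ_log_self hp.one_lt _
            _ ≤ p ^ (i + 1) := Nat.pow_le_pow_right (by omega) (by omega)
        have : n % p ^ (i + 1) ≤ n := Nat.mod_le _ _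
        omega
    · intro h i hi
      obtain ⟨hi1, _⟩ := hi
      obtain ⟨j, rfl⟩ : ∃ j, i = j + 1 := ⟨i - 1, by omega⟩
      have := h j
      omega
end

section
/- Let p and q be two distinct odd prime numbers, and let A = {n ∈ ℕ, n ≥ 1 : gcd(pq, binomial(2n, n)) = 1}. Then there exists a constant c > 0 (depending on p and q) such that #(A ∩ [1, N]) ≥ c · log N for all sufficiently large integers N. -/
open Finset

namespace EGRS

/-- Numbers expressible with `k` base-`p` digits, all at most `(p-1)/2`. -/
inductive Spart (p : ℕ) : ℕ → ℕ → Prop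
  | zero : Spart p 0 0
  | step {k d t : ℕ} : 2 * d < p → Spart p k t → Spart p (k + 1) (d * p ^ k + t)

theorem Spart.bound {p k r : ℕ} (h : Spart p k r) : 2 * r < p ^ k := by
  induction h with
  | zero => simp
  | @step k d t hd ht ih =>
    have h1 : 2 * d + 1 ≤ p := hd
    have h2 : 2 * t + 1 ≤ p ^ k := ih
    have : 2 * (d * p ^ k + t) + 1 ≤ p ^ (k + 1) := by
      calc 2 * (d * p ^ k + t) + 1 = (2 * d) * p ^ k + (2 * t + 1) := by ring
        _ ≤ (2 * d) * p ^ k + p ^ k := by omega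
        _ = (2 * d + 1) * p ^ k := by ring
        _ ≤ p * p ^ k := Nat.mul_le_mul_right _ h1
        _ = p ^ (k + 1) := by ring
    omega

theorem Spart.mod_bound {p k r : ℕ} (h : Spart p k r) :
    ∀ i ≤ k, 2 * (r % p ^ i) < p ^ i := by
  induction h with
  | zero =>
    intro i hi
    have : i = 0 := Nat.le_zero.mp hi
    subst this; simp
  | @step k d t hd ht ih =>
    intro i hi
    rcases Nat.lt_or_ge i (k + 1) with hik | hik
    · have hik' : i ≤ k := by omega
      obtain ⟨j, rfl⟩ : ∃ j, k = i + j := ⟨k - i, by omega⟩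
      have hrw : d * p ^ (i + j) + t = t + (d * p ^ j) * p ^ i := by ring
      rw [hrw, Nat.add_mul_mod_self_right]
      exact ih i (by omega)
    · have hieq : i = k + 1 := by omega
      subst hieq
      have hb := Spart.bound (Spart.step hd ht)
      rw [Nat.mod_eq_of_lt (by omega)]
      exact hb

/-- `n` has all base-`p` partial remainders in the lower half; equivalently no
carries occur when adding `n + n` in base `p`. -/
def Good (p n : ℕ) : Prop := ∀ i : ℕ, 2 * (n % p ^ i) < p ^ i

theorem good_assemble {p k z r : ℕ} (hp : 1 ≤ p) (hz : Good p z) (hr : Spart p k r) :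
    Good p (z * p ^ k + r) := by
  intro i
  rcases le_or_gt i k with hik | hki
  · obtain ⟨j, rfl⟩ : ∃ j, k = i + j := ⟨k - i, by omega⟩
    have hrw : z * p ^ (i + j) + r = r + (z * p ^ j) * p ^ i := by ring
    rw [hrw, Nat.add_mul_mod_self_right]
    exact hr.mod_bound i (by omega)
  · obtain ⟨j, rfl⟩ : ∃ j, i = k + j := ⟨i - k, by omega⟩
    have hzj := hz j
    have hrb := hr.bound
    have hrem : 2 * ((z % p ^ j) * p ^ k + r) + 1 ≤ p ^ (k + j) := by
      calc 2 * ((z % p ^ j) * p ^ k + r) + 1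
          = (2 * (z % p ^ j)) * p ^ k + (2 * r + 1) := by ring
        _ ≤ (2 * (z % p ^ j)) * p ^ k + p ^ k := by omega
        _ = (2 * (z % p ^ j) + 1) * p ^ k := by ring
        _ ≤ p ^ j * p ^ k := Nat.mul_le_mul_right _ (by omega)
        _ = p ^ (k + j) := by rw [← pow_add, Nat.add_comm]
    have hdecomp : z * p ^ k + r = (z / p ^ j) * p ^ (k + j) + ((z % p ^ j) * p ^ k + r) := by
      conv_lhs => rw [← Nat.div_add_mod z (p ^ j)]
      ring
    rw [hdecomp, Nat.mul_add_mod' _ _ _, Nat.mod_eq_of_lt (by omega)]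
    omega


/-- One decomposition step of the discrete "gap lemma". -/
theorem gapStep (p q k' m u v : ℕ) (hpodd : Odd p)
    (hinv1 : p ^ (k' + 1) ≤ p * q ^ m)
    (ov1 : 2 * v < 2 * u + p ^ (k' + 1)) (ov2 : 2 * u < 2 * v + q ^ m)
    (rec : ∀ u' v', 2 * v' < 2 * u' + p ^ k' → 2 * u' < 2 * v' + q ^ m →
      ∃ a b, Spart p k' a ∧ Spart q m b ∧ u' + a = v' + b) :
    ∃ a b, Spart p (k' + 1) a ∧ Spart q m b ∧ u + a = v + b := by
  have hp1 : 1 ≤ p := by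
    rcases hpodd with ⟨j, hj⟩; omega
  have hPpos : 0 < p ^ k' := Nat.pow_pos hp1
  have hp'q : p ^ k' ≤ q ^ m := by
    have : p * p ^ k' ≤ p * q ^ m := by
      have : p ^ (k' + 1) = p * p ^ k' := by ring
      omega
    exact Nat.le_of_mul_le_mul_left this (by omega)
  have hps : p ^ (k' + 1) = p * p ^ k' := by ring
  rcases le_or_gt v u with hvu | huv
  · obtain ⟨a, b, ha, hb, heq⟩ := rec u v (by omega) ov2
    refine ⟨0 * p ^ k' + a, b, Spart.step (by omega) ha, hb, by omega⟩
  · -- v > u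
    obtain ⟨δ, hδv, hδ1⟩ : ∃ δ, v = u + δ ∧ 1 ≤ δ := ⟨v - u, by omega, by omega⟩
    obtain ⟨e, ρ, hE, hρlt⟩ : ∃ e ρ, δ = p ^ k' * e + ρ ∧ ρ < p ^ k' :=
      ⟨δ / p ^ k', δ % p ^ k', (Nat.div_add_mod δ (p ^ k')).symm, Nat.mod_lt _ hPpos⟩
    have h2δ : 2 * δ < p * p ^ k' := by rw [← hps]; omega
    have he : 2 * e < p := by
      by_contra hcon
      push_neg at hcon
      have c1 : p * p ^ k' ≤ (2 * e) * p ^ k' := Nat.mul_le_mul_right _ hcon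
      have c2 : (2 * e) * p ^ k' = 2 * (p ^ k' * e) := by ring
      omega
    rcases lt_or_ge (2 * ρ) (p ^ k') with hρc | hρc
    · -- use child e
      obtain ⟨a, b, ha, hb, heq⟩ := rec (u + p ^ k' * e) v (by omega) (by omega)
      refine ⟨e * p ^ k' + a, b, Spart.step he ha, hb, ?_⟩
      have : e * p ^ k' = p ^ k' * e := by ring
      omega
    · -- use child e+1
      have hoddP : Odd (p ^ k') := hpodd.pow
      have hne : 2 * ρ ≠ p ^ k' := by
        rcases hoddP with ⟨j, hj⟩; omega
      have hρ1 : p ^ k' + 1 ≤ 2 * ρ := by omega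
      have he1 : 2 * (e + 1) < p := by
        by_contra hcon
        push_neg at hcon
        have hpo2 : p ≤ 2 * e + 1 := by
          rcases hpodd with ⟨j, hj⟩; omega
        have c1 : p * p ^ k' ≤ (2 * e + 1) * p ^ k' := Nat.mul_le_mul_right _ hpo2
        have c2 : (2 * e + 1) * p ^ k' = 2 * (p ^ k' * e) + p ^ k' := by ring
        omega
      obtain ⟨a, b, ha, hb, heq⟩ := rec (u + (p ^ k' * e + p ^ k')) v (by omega) (by omega)
      refine ⟨(e + 1) * p ^ k' + a, b, Spart.step he1 ha, hb, ?_⟩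
      have : (e + 1) * p ^ k' = p ^ k' * e + p ^ k' := by ring
      omega

/-- The discrete gap lemma: translated digit-Cantor pieces at comparable scales
with overlapping hulls intersect. -/
theorem gapMain : ∀ n p q k m u v : ℕ, Odd p → Odd q →
    k + m ≤ n → p ^ k ≤ p * q ^ m → q ^ m ≤ q * p ^ k →
    2 * v < 2 * u + p ^ k → 2 * u < 2 * v + q ^ m →
    ∃ a b, Spart p k a ∧ Spart q m b ∧ u + a = v + b := by
  intro n
  induction n using Nat.strong_induction_on with
  | _ n IH =>
    intro p q k m u v hpo hqo hnm hi1 hi2 hov1 hov2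
    have hp1 : 1 ≤ p := by rcases hpo with ⟨j, hj⟩; omega
    have hq1 : 1 ≤ q := by rcases hqo with ⟨j, hj⟩; omega
    rcases Nat.eq_zero_or_pos k with hk0 | hkpos
    · subst hk0
      rcases Nat.eq_zero_or_pos m with hm0 | hmpos
      · subst hm0
        simp only [pow_zero] at hov1 hov2
        exact ⟨0, 0, Spart.zero, Spart.zero, by omega⟩
      · obtain ⟨m', rfl⟩ : ∃ m', m = m' + 1 := ⟨m - 1, by omega⟩
        have hrec : ∀ u' v', 2 * v' < 2 * u' + q ^ m' → 2 * u' < 2 * v' + p ^ 0 →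
            ∃ a b, Spart q m' a ∧ Spart p 0 b ∧ u' + a = v' + b := by
          intro u' v' c1 c2
          refine IH (m' + 0) (by omega) q p m' 0 u' v' hqo hpo (le_refl _) ?_ ?_ c1 c2
          · -- q ^ m' ≤ q * p ^ 0
            have : q * q ^ m' ≤ q * p ^ 0 := by
              have : q ^ (m' + 1) = q * q ^ m' := by ring
              omega
            have := Nat.le_of_mul_le_mul_left this (by omega)
            calc q ^ m' ≤ p ^ 0 := this
              _ ≤ q * p ^ 0 := Nat.le_mul_of_pos_left _ (by omega)
          · -- p ^ 0 ≤ p * q ^ m'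
            have hpos : (0:ℕ) < p * q ^ m' := Nat.mul_pos (by omega) (Nat.pow_pos hq1)
            simp only [pow_zero]
            omega
        obtain ⟨a, b, ha, hb, heq⟩ := gapStep q p m' 0 v u hqo hi2 hov2 hov1 hrec
        exact ⟨b, a, hb, ha, heq.symm⟩
    · obtain ⟨k'', rfl⟩ : ∃ k'', k = k'' + 1 := ⟨k - 1, by omega⟩
      by_cases hc : q ^ m ≤ q * p ^ k''
      · have hrec : ∀ u' v', 2 * v' < 2 * u' + p ^ k'' → 2 * u' < 2 * v' + q ^ m →
            ∃ a b, Spart p k'' a ∧ Spart q m b ∧ u' + a = v' + b := by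
          intro u' v' c1 c2
          refine IH (k'' + m) (by omega) p q k'' m u' v' hpo hqo (le_refl _) ?_ hc c1 c2
          have hple : p ^ k'' ≤ q ^ m := by
            have h1 : p * p ^ k'' ≤ p * q ^ m := by
              have : p ^ (k'' + 1) = p * p ^ k'' := by ring
              omega
            exact Nat.le_of_mul_le_mul_left h1 (by omega)
          calc p ^ k'' ≤ q ^ m := hple
            _ ≤ p * q ^ m := Nat.le_mul_of_pos_left _ (by omega)
        exact gapStep p q k'' m u v hpo hi1 hov1 hov2 hrec
      · push_neg at hc
        have hm1 : 1 ≤ m := by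
          by_contra hcon
          have : m = 0 := by omega
          subst this
          simp only [pow_zero] at hc
          have : (1:ℕ) ≤ q * p ^ k'' :=
            Nat.one_le_iff_ne_zero.mpr (Nat.mul_ne_zero (by omega)
              (Nat.pos_iff_ne_zero.mp (Nat.pow_pos hp1)))
          omega
        obtain ⟨m', rfl⟩ : ∃ m', m = m' + 1 := ⟨m - 1, by omega⟩
        have hpk : p ^ (k'' + 1) ≤ p * q ^ m' := by
          have h1 : q * p ^ k'' < q * q ^ m' := by
            have : q ^ (m' + 1) = q * q ^ m' := by ring
            omega
          have h2 : p ^ k'' < q ^ m' := Nat.lt_of_mul_lt_mul_left h1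
          have : p ^ (k'' + 1) = p * p ^ k'' := by ring
          calc p ^ (k'' + 1) = p * p ^ k'' := this
            _ ≤ p * q ^ m' := Nat.mul_le_mul_left _ (by omega)
        have hrec : ∀ u' v', 2 * v' < 2 * u' + q ^ m' → 2 * u' < 2 * v' + p ^ (k'' + 1) →
            ∃ a b, Spart q m' a ∧ Spart p (k'' + 1) b ∧ u' + a = v' + b := by
          intro u' v' c1 c2
          refine IH (m' + (k'' + 1)) (by omega) q p m' (k'' + 1) u' v' hqo hpo (le_refl _)
            ?_ hpk c1 c2
          calc q ^ m' ≤ q ^ (m' + 1) := Nat.pow_le_pow_right hq1 (by omega)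
            _ ≤ q * p ^ (k'' + 1) := hi2
        obtain ⟨a, b, ha, hb, heq⟩ := gapStep q p m' (k'' + 1) v u hqo hi2 hov2 hov1 hrec
        exact ⟨b, a, hb, ha, heq.symm⟩


theorem good_of_small {p z : ℕ} (hz : 2 * z < p) : Good p z := by
  intro i
  match i with
  | 0 => simp [Nat.mod_one]
  | (i + 1) =>
    have hp1 : 1 ≤ p := by omega
    have hle : p ≤ p ^ (i + 1) := by
      calc p = p ^ 1 := (pow_one p).symm
        _ ≤ p ^ (i + 1) := Nat.pow_le_pow_right hp1 (by omega)
    rw [Nat.mod_eq_of_lt (by omega)]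
    omega

theorem good_self {p : ℕ} (hp : 3 ≤ p) : Good p p := by
  intro i
  match i with
  | 0 => simp [Nat.mod_one]
  | 1 => simp [pow_one, Nat.mod_self]; omega
  | (i + 2) =>
    have hsq : p * p ≤ p ^ (i + 2) := by
      calc p * p = p ^ 2 := by ring
        _ ≤ p ^ (i + 2) := Nat.pow_le_pow_right (by omega) (by omega)
    have h2p : 2 * p < p * p := by
      have := (Nat.mul_lt_mul_right (show 0 < p by omega)).mpr (show 2 < p by omega)
      omega
    rw [Nat.mod_eq_of_lt (by omega)]
    omega

theorem good_between {p z : ℕ} (hp : 3 ≤ p) (hpodd : Odd p)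
    (h1 : p ≤ z) (h2 : 2 * z < 3 * p) : Good p z := by
  intro i
  match i with
  | 0 => simp [Nat.mod_one]
  | 1 =>
    rw [pow_one]
    obtain ⟨c, rfl⟩ : ∃ c, z = p + c := ⟨z - p, by omega⟩
    have hcp : c < p := by omega
    rw [Nat.add_mod_left, Nat.mod_eq_of_lt hcp]
    omega
  | (i + 2) =>
    have hsq : p * p ≤ p ^ (i + 2) := by
      calc p * p = p ^ 2 := by ring
        _ ≤ p ^ (i + 2) := Nat.pow_le_pow_right (by omega) (by omega)
    have h3p : 3 * p ≤ p * p := by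
      have := Nat.mul_le_mul_right p hp
      omega
    rw [Nat.mod_eq_of_lt (by omega)]
    omega

/-- Main construction: a common good number in each window `[q^m, 2p·q^m)`. -/
theorem exists_good {p q : ℕ} (hp : p.Prime) (hq : q.Prime)
    (hpodd : Odd p) (hqodd : Odd q) (hlt : p < q) {m : ℕ} (hm : 1 ≤ m) :
    ∃ n : ℕ, Good p n ∧ Good q n ∧ q ^ m ≤ n ∧ n < 2 * p * q ^ m := by
  have hp3 : 3 ≤ p := by
    have h2 := hp.two_le
    rcases hpodd with ⟨j, hj⟩; omega
  have hq5 : 5 ≤ q := by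
    rcases hqodd with ⟨j, hj⟩; omega
  obtain ⟨k, hkdef⟩ : ∃ k, k = Nat.log p (q ^ m) := ⟨_, rfl⟩
  obtain ⟨P, hPdef⟩ : ∃ P, P = p ^ k := ⟨_, rfl⟩
  obtain ⟨Q, hQdef⟩ : ∃ Q, Q = q ^ m := ⟨_, rfl⟩
  have hQpos : 0 < Q := hQdef ▸ Nat.pow_pos (by omega)
  have hqQ : q ≤ Q := hQdef ▸ Nat.le_self_pow (by omega) q
  have hP_le : P ≤ Q := by
    rw [hPdef, hQdef, hkdef]
    exact Nat.pow_log_le_self p (by positivity)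
  have hQ_lt : Q < P * p := by
    have h := Nat.lt_pow_succ_log_self (show 1 < p by omega) (q ^ m)
    have hps : p ^ (Nat.log p (q ^ m)).succ = P * p := by
      rw [hPdef, hkdef, pow_succ]
    omega
  have hk1 : 1 ≤ k := by
    rw [hkdef]
    exact Nat.log_pos (by omega) (by omega)
  clear hkdef
  have hPQ : P < Q := by
    rcases Nat.lt_or_ge P Q with h | h
    · exact h
    · exfalso
      have hPeQ : P = Q := by omega
      have hqP : q ∣ P := by
        rw [hPeQ, hQdef]
        exact dvd_pow_self q (by omega)
      rw [hPdef] at hqP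
      have : q ∣ p := hq.dvd_of_dvd_pow hqP
      have := (Nat.prime_dvd_prime_iff_eq hq hp).mp this
      omega
  have hPpos : 0 < P := hPdef ▸ Nat.pow_pos (by omega)
  have hPodd : Odd P := hPdef ▸ hpodd.pow
  have hQodd : Odd Q := hQdef ▸ hqodd.pow
  have inv1 : P ≤ p * Q := le_trans hP_le (Nat.le_mul_of_pos_left Q (by omega))
  have inv2 : Q ≤ q * P := by
    have h1 : P * p ≤ P * q := Nat.mul_le_mul_left P (by omega)
    have h2 : P * q = q * P := by ring
    omega
  -- z₁ = round(Q/P)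
  obtain ⟨z₁, r₁, hz₁0, hr₁⟩ : ∃ z r, (2 * P) * z + r = 2 * Q + P ∧ r < 2 * P :=
    ⟨(2 * Q + P) / (2 * P), (2 * Q + P) % (2 * P), Nat.div_add_mod _ _,
      Nat.mod_lt _ (by omega)⟩
  have hz₁ : 2 * (z₁ * P) + r₁ = 2 * Q + P := by
    have hbr : (2 * P) * z₁ = 2 * (z₁ * P) := by ring
    omega
  by_cases c1 : 2 * z₁ < p
  · -- w = 1, z = z₁
    have hzgood : Good p z₁ := good_of_small c1
    have hwgood : Good q 1 := good_of_small (by omega)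
    obtain ⟨a, b, ha, hb, heq⟩ := gapMain (k + m) p q k m (z₁ * P) (1 * Q)
      hpodd hqodd le_rfl (by rw [← hPdef, ← hQdef]; exact inv1)
      (by rw [← hPdef, ← hQdef]; exact inv2)
      (by rw [← hPdef]; omega)
      (by rw [← hQdef]; omega)
    refine ⟨z₁ * P + a, by rw [hPdef]; exact good_assemble (by omega) hzgood ha, ?_, ?_, ?_⟩
    · have hg := good_assemble (show 1 ≤ q by omega) hwgood hb
      rw [show z₁ * P + a = 1 * Q + b by omega, hQdef]
      exact hg
    · rw [← hQdef]; omega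
    · have hab := ha.bound
      rw [← hPdef] at hab
      rw [← hQdef]
      have hz1P : (2 * z₁ + 1) * P ≤ p * P := Nat.mul_le_mul_right P (by omega)
      have hbr1 : (2 * z₁ + 1) * P = 2 * (z₁ * P) + P := by ring
      have hpP : p * P ≤ p * Q := Nat.mul_le_mul_left p hP_le
      have hbr2 : 2 * (p * Q) = 2 * p * Q := by ring
      omega
  by_cases c2 : 2 * p * P < 3 * Q
  · -- w = 1, z = p
    have hzgood : Good p p := good_self hp3
    have hwgood : Good q 1 := good_of_small (by omega)
    have hbrp : 2 * (p * P) = 2 * p * P := by ring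
    have hbrp2 : P * p = p * P := by ring
    obtain ⟨a, b, ha, hb, heq⟩ := gapMain (k + m) p q k m (p * P) (1 * Q)
      hpodd hqodd le_rfl (by rw [← hPdef, ← hQdef]; exact inv1)
      (by rw [← hPdef, ← hQdef]; exact inv2)
      (by rw [← hPdef]; omega)
      (by rw [← hQdef]; omega)
    refine ⟨p * P + a, by rw [hPdef]; exact good_assemble (by omega) hzgood ha, ?_, ?_, ?_⟩
    · have hg := good_assemble (show 1 ≤ q by omega) hwgood hb
      rw [show p * P + a = 1 * Q + b by omega, hQdef]
      exact hg
    · rw [← hQdef]; omega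
    · have hab := ha.bound
      rw [← hPdef] at hab
      rw [← hQdef]
      have hpP : p * P ≤ p * Q := Nat.mul_le_mul_left p hP_le
      have hbr2 : 2 * (p * Q) = 2 * p * Q := by ring
      omega
  · -- w = 2, z = z₂
    push_neg at c1 c2
    obtain ⟨z₂, r₂, hz₂0, hr₂⟩ : ∃ z r, (2 * P) * z + r = 4 * Q + P ∧ r < 2 * P :=
      ⟨(4 * Q + P) / (2 * P), (4 * Q + P) % (2 * P), Nat.div_add_mod _ _,
        Nat.mod_lt _ (by omega)⟩
    have hz₂ : 2 * (z₂ * P) + r₂ = 4 * Q + P := by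
      have hbr : (2 * P) * z₂ = 2 * (z₂ * P) := by ring
      omega
    have hodd2 : 2 * z₁ ≠ p := by rcases hpodd with ⟨j, hj⟩; omega
    have hp1z : p + 1 ≤ 2 * z₁ := by omega
    have hpP2Q : p * P ≤ 2 * Q := by
      have h1 : (p + 1) * P ≤ (2 * z₁) * P := Nat.mul_le_mul_right P hp1z
      have h2 : (2 * z₁) * P = 2 * (z₁ * P) := by ring
      have h3 : (p + 1) * P = p * P + P := by ring
      omega
    have hz₂low : p * P ≤ z₂ * P := by
      by_contra hcon
      push_neg at hcon
      have hzlt : z₂ < p := by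
        by_contra hge
        push_neg at hge
        have := Nat.mul_le_mul_right P hge
        omega
      have hstep : (z₂ + 1) * P ≤ p * P := Nat.mul_le_mul_right P (by omega)
      have hexp : (z₂ + 1) * P = z₂ * P + P := by ring
      omega
    have hz₂p : p ≤ z₂ := by
      have hPpz : P * p ≤ P * z₂ := by
        have hb1 : P * p = p * P := by ring
        have hb2 : P * z₂ = z₂ * P := by ring
        omega
      exact Nat.le_of_mul_le_mul_left hPpz hPpos
    have hz₂high : 2 * z₂ < 3 * p := by
      have h1 : 6 * (z₂ * P) ≤ 12 * Q + 3 * P := by omega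
      have hc2' : 2 * p * P = 2 * (p * P) := by ring
      have h2 : 12 * Q ≤ 8 * (p * P) := by omega
      have h3 : 6 * (z₂ * P) = (6 * z₂) * P := by ring
      have h4 : 8 * (p * P) + 3 * P = (8 * p + 3) * P := by ring
      have h5 : (6 * z₂) * P ≤ (8 * p + 3) * P := by omega
      have h6 : 6 * z₂ ≤ 8 * p + 3 := Nat.le_of_mul_le_mul_right h5 hPpos
      have h7 : 2 * z₂ ≤ 3 * p := by omega
      have h8 : 2 * z₂ ≠ 3 * p := by rcases hpodd with ⟨j, hj⟩; omega
      omega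
    have hzgood : Good p z₂ := good_between hp3 hpodd hz₂p hz₂high
    have hwgood : Good q 2 := good_of_small (by omega)
    obtain ⟨a, b, ha, hb, heq⟩ := gapMain (k + m) p q k m (z₂ * P) (2 * Q)
      hpodd hqodd le_rfl (by rw [← hPdef, ← hQdef]; exact inv1)
      (by rw [← hPdef, ← hQdef]; exact inv2)
      (by rw [← hPdef]; omega)
      (by rw [← hQdef]; omega)
    refine ⟨z₂ * P + a, by rw [hPdef]; exact good_assemble (by omega) hzgood ha, ?_, ?_, ?_⟩
    · have hg := good_assemble (show 1 ≤ q by omega) hwgood hb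
      rw [show z₂ * P + a = 2 * Q + b by omega, hQdef]
      exact hg
    · rw [← hQdef]; omega
    · have hab := ha.bound
      rw [← hPdef] at hab
      rw [← hQdef]
      have h1 : (2 * z₂ + 1) * P ≤ (3 * p) * P := Nat.mul_le_mul_right P (by omega)
      have h2 : (2 * z₂ + 1) * P = 2 * (z₂ * P) + P := by ring
      have h3 : (3 * p) * P ≤ (3 * p) * Q := Nat.mul_le_mul_left (3 * p) hP_le
      have h4 : (3 * p) * Q = 3 * (p * Q) := by ring
      have h5 : 2 * p * Q = 2 * (p * Q) := by ring
      have hpQpos : 0 < p * Q := Nat.mul_pos (by omega) hQpos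
      omega


theorem not_dvd_choose {p n : ℕ} (hp : p.Prime) (h : Good p n) :
    ¬ p ∣ (2 * n).choose n := by
  have hem := Nat.Prime.emultiplicity_choose hp (show n ≤ 2 * n by omega)
    (show Nat.log p (2 * n) < Nat.log p (2 * n) + 1 by omega)
  have hfe : {i ∈ Ico 1 (Nat.log p (2 * n) + 1) |
      p ^ i ≤ n % p ^ i + (2 * n - n) % p ^ i} = (∅ : Finset ℕ) := by
    rw [Finset.filter_eq_empty_iff]
    intro i _
    have h2n : 2 * n - n = n := by omega
    rw [h2n]
    have := h i
    omega
  rw [hfe] at hem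
  simp only [Finset.card_empty, Nat.cast_zero] at hem
  exact emultiplicity_eq_zero.mp hem

theorem coprime_good {p q n : ℕ} (hp : p.Prime) (hq : q.Prime)
    (h1 : Good p n) (h2 : Good q n) :
    Nat.gcd (p * q) ((2 * n).choose n) = 1 :=
  Nat.Coprime.mul (hp.coprime_iff_not_dvd.mpr (not_dvd_choose hp h1))
    (hq.coprime_iff_not_dvd.mpr (not_dvd_choose hq h2))

theorem mainAux (p q : ℕ) (hp : p.Prime) (hq : q.Prime)
    (hpodd : Odd p) (hqodd : Odd q) (hlt : p < q) :
    ∃ c : ℝ, 0 < c ∧ ∃ N₀ : ℕ, ∀ N : ℕ, N₀ ≤ N →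
      c * Real.log N ≤
        ((Finset.Icc 1 N).filter (fun n => Nat.gcd (p * q) ((2 * n).choose n) = 1)).card := by
  have hp3 : 3 ≤ p := by
    have := hp.two_le
    rcases hpodd with ⟨j, hj⟩; omega
  have hq5 : 5 ≤ q := by
    rcases hqodd with ⟨j, hj⟩; omega
  have key : ∀ j : ℕ, ∃ n, Good p n ∧ Good q n ∧
      q ^ (2 * j + 1) ≤ n ∧ n < 2 * p * q ^ (2 * j + 1) :=
    fun j => exists_good hp hq hpodd hqodd hlt (by omega)
  choose f hf using key
  have hfup : ∀ j, f j < q ^ (2 * j + 3) := by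
    intro j
    have h1 := (hf j).2.2.2
    have h2 : 2 * p < q ^ 2 := by
      have : q ^ 2 = q * q := by ring
      nlinarith
    have h3 : 2 * p * q ^ (2 * j + 1) ≤ q ^ 2 * q ^ (2 * j + 1) :=
      Nat.mul_le_mul_right _ (by omega)
    have h4 : q ^ 2 * q ^ (2 * j + 1) = q ^ (2 * j + 3) := by
      rw [← pow_add]; ring_nf
    omega
  have hflow : ∀ j, q ^ (2 * j + 1) ≤ f j := fun j => (hf j).2.2.1
  have hfpos : ∀ j, 1 ≤ f j := by
    intro j
    have := hflow j
    have : 0 < q ^ (2 * j + 1) := by positivity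
    omega
  have hmono : ∀ {i j : ℕ}, i < j → f i < f j := by
    intro i j hij
    calc f i < q ^ (2 * i + 3) := hfup i
      _ ≤ q ^ (2 * j + 1) := Nat.pow_le_pow_right (by omega) (by omega)
      _ ≤ f j := hflow j
  have hlq : (0:ℝ) < Real.log q := Real.log_pos (by exact_mod_cast (show (1:ℕ) < q by omega))
  refine ⟨1 / (8 * Real.log q), one_div_pos.mpr (by linarith), q ^ 9, ?_⟩
  intro N hN
  obtain ⟨L, hLdef⟩ : ∃ L, L = Nat.log q N := ⟨_, rfl⟩
  have hL9 : 9 ≤ L := by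
    have h1 : Nat.log q (q ^ 9) ≤ Nat.log q N := Nat.log_mono_right hN
    have h2 : Nat.log q (q ^ 9) = 9 := Nat.log_pow (show 1 < q by omega) 9
    omega
  have hNpos : 1 ≤ N := le_trans (Nat.one_le_iff_ne_zero.mpr (by positivity)) hN
  obtain ⟨J, hJdef⟩ : ∃ J, J = (L - 1) / 2 := ⟨_, rfl⟩
  have hJL : L ≤ 2 * J + 2 := by omega
  have hJmem : ∀ j ∈ Finset.range J, f j ∈ (Finset.Icc 1 N).filter
      (fun n => Nat.gcd (p * q) ((2 * n).choose n) = 1) := by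
    intro j hj
    rw [Finset.mem_range] at hj
    have hup : f j < q ^ (2 * j + 3) := hfup j
    have h23 : 2 * j + 3 ≤ L := by omega
    have hqL : q ^ (2 * j + 3) ≤ q ^ L := Nat.pow_le_pow_right (by omega) h23
    have hLN : q ^ L ≤ N := by rw [hLdef]; exact Nat.pow_log_le_self q (by omega)
    exact Finset.mem_filter.mpr ⟨Finset.mem_Icc.mpr ⟨hfpos j, by omega⟩,
      coprime_good hp hq (hf j).1 (hf j).2.1⟩
  have hinj : Set.InjOn f (Finset.range J) := by
    intro a _ b _ hab
    rcases lt_trichotomy a b with h | h | h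
    · exact absurd hab (hmono h).ne
    · exact h
    · exact absurd hab.symm (hmono h).ne
  have hcard : J ≤ ((Finset.Icc 1 N).filter
      (fun n => Nat.gcd (p * q) ((2 * n).choose n) = 1)).card := by
    have := Finset.card_le_card_of_injOn f hJmem hinj
    simpa using this
  have hNlt : (N:ℝ) < (q:ℝ) ^ (L + 1) := by
    have := Nat.lt_pow_succ_log_self (show 1 < q by omega) N
    rw [hLdef]
    exact_mod_cast this
  have hlogN : Real.log N ≤ ((L:ℝ) + 1) * Real.log q := by
    have h1 : Real.log N ≤ Real.log ((q:ℝ) ^ (L + 1)) := by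
      apply (Real.log_le_log_iff (by exact_mod_cast hNpos) (by positivity)).mpr
      exact le_of_lt hNlt
    calc Real.log N ≤ Real.log ((q:ℝ) ^ (L + 1)) := h1
      _ = ((L:ℝ) + 1) * Real.log q := by rw [Real.log_pow]; push_cast; ring
  have hJcast : (L:ℝ) ≤ 2 * (J:ℝ) + 2 := by exact_mod_cast hJL
  have hLcast : (9:ℝ) ≤ (L:ℝ) := by exact_mod_cast hL9
  have hcardcast : (J:ℝ) ≤ (((Finset.Icc 1 N).filter
      (fun n => Nat.gcd (p * q) ((2 * n).choose n) = 1)).card : ℝ) := by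
    exact_mod_cast hcard
  have hsplit : (1 / (8 * Real.log q)) * Real.log N ≤ ((L:ℝ) + 1) / 8 := by
    have hnn : (0:ℝ) ≤ 1 / (8 * Real.log q) := by positivity
    calc (1 / (8 * Real.log q)) * Real.log N
        ≤ (1 / (8 * Real.log q)) * (((L:ℝ) + 1) * Real.log q) :=
          mul_le_mul_of_nonneg_left hlogN hnn
      _ = ((L:ℝ) + 1) / 8 := by
          field_simp
  have hfin : ((L:ℝ) + 1) / 8 ≤ (J:ℝ) := by linarith
  linarith

theorem final (p q : ℕ) (hp : p.Prime) (hq : q.Prime)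
    (hpodd : Odd p) (hqodd : Odd q) (hpq : p ≠ q) :
    ∃ c : ℝ, 0 < c ∧ ∃ N₀ : ℕ, ∀ N : ℕ, N₀ ≤ N →
      c * Real.log N ≤
        ((Finset.Icc 1 N).filter (fun n => Nat.gcd (p * q) ((2 * n).choose n) = 1)).card := by
  rcases hpq.lt_or_gt with h | h
  · exact mainAux p q hp hq hpodd hqodd h
  · have := mainAux q p hq hp hqodd hpodd h
    simpa only [show q * p = p * q from Nat.mul_comm q p] using this

end EGRS

/-- For distinct odd primes `p`, `q`, the number of `n ∈ [1, N]` with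
`gcd(pq, binomial(2n,n)) = 1` is at least `c · log N` for large `N`. -/
theorem log_many_coprime_central_binom (p q : ℕ) (hp : p.Prime) (hq : q.Prime)
    (hpodd : Odd p) (hqodd : Odd q) (hpq : p ≠ q) :
    ∃ c : ℝ, 0 < c ∧ ∃ N₀ : ℕ, ∀ N : ℕ, N₀ ≤ N →
      c * Real.log N ≤
        ((Finset.Icc 1 N).filter (fun n => Nat.gcd (p * q) ((2 * n).choose n) = 1)).card := by
  rcases hpq.lt_or_gt with h | h
  · exact EGRS.mainAux p q hp hq hpodd hqodd h
  · have := EGRS.mainAux q p hq hp hqodd hpodd h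
    simpa only [show q * p = p * q from Nat.mul_comm q p] using this
end

section
/- Let p and q be two distinct odd prime numbers. Then there are infinitely many positive integers n such that gcd(pq, binomial(2n, n)) = 1. -/
private def Fitt (b n : ℕ) : Prop := ∀ i : ℕ, 2 * (n % b ^ i) < b ^ i

private lemma fitt_zero (b : ℕ) (hb : 0 < b) : Fitt b 0 := by
  intro i
  have : 0 < b ^ i := pow_pos hb i
  simp [Nat.zero_mod]
  omega

private lemma fitt_small {b c : ℕ} (hb : 0 < b) (h : 2 * c < b) : Fitt b c := by
  intro i
  rcases Nat.eq_zero_or_pos i with hi | hi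
  · subst hi
    simp [Nat.pow_zero, Nat.mod_one]
  · have hble : b ≤ b ^ i := Nat.le_self_pow (by omega) b
    have hlt : c < b ^ i := by omega
    rw [Nat.mod_eq_of_lt hlt]
    omega

private lemma fitt_prepend {q a c v : ℕ} (hq : 0 < q) (hc : 2 * c < q)
    (hv : Fitt q v) (hvlt : 2 * v < q ^ a) :
    2 * (c * q ^ a + v) < q ^ (a + 1) ∧ Fitt q (c * q ^ a + v) := by
  have hqa : 0 < q ^ a := pow_pos hq a
  have h1 : 2 * c + 1 ≤ q := by omega
  have hbound : 2 * (c * q ^ a + v) < q ^ (a + 1) := by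
    calc 2 * (c * q ^ a + v) = 2 * c * q ^ a + 2 * v := by ring
    _ < 2 * c * q ^ a + q ^ a := Nat.add_lt_add_left hvlt _
    _ = (2 * c + 1) * q ^ a := by ring
    _ ≤ q * q ^ a := Nat.mul_le_mul_right _ h1
    _ = q ^ (a + 1) := by rw [pow_succ]; ring
  refine ⟨hbound, fun i => ?_⟩
  rcases le_or_gt i a with h | h
  · have hsplit : q ^ a = q ^ (a - i) * q ^ i := by
      rw [← pow_add]
      congr 1
      omega
    rw [show c * q ^ a + v = v + c * q ^ (a - i) * q ^ i by rw [hsplit]; ring,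
      Nat.add_mul_mod_self_right]
    exact hv i
  · have hle : q ^ (a + 1) ≤ q ^ i := Nat.pow_le_pow_right hq (by omega)
    have hlt : c * q ^ a + v < q ^ i := by omega
    rw [Nat.mod_eq_of_lt hlt]
    omega

private lemma fitt_comp {p a n w : ℕ} (hpodd : Odd p) (hp1 : 1 < p)
    (h : 2 * n + 2 * w + 1 = p ^ a) (hw : Fitt p w) : Fitt p n := by
  intro i
  rcases Nat.eq_zero_or_pos i with hi | hi
  · subst hi
    simp [Nat.pow_zero, Nat.mod_one]
  rcases le_or_gt i a with hia | hia
  · obtain ⟨t, ht⟩ : p ^ i ∣ p ^ a := pow_dvd_pow p hia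
    have hP : 0 < p ^ i := pow_pos (by omega) i
    have hPodd : p ^ i % 2 = 1 := Nat.odd_iff.mp hpodd.pow
    have e1 : n % p ^ i + p ^ i * (n / p ^ i) = n := Nat.mod_add_div n (p ^ i)
    have e2 : w % p ^ i + p ^ i * (w / p ^ i) = w := Nat.mod_add_div w (p ^ i)
    have hwlt : 2 * (w % p ^ i) < p ^ i := hw i
    have hnlt : n % p ^ i < p ^ i := Nat.mod_lt _ hP
    have hmod : (2 * (n % p ^ i) + 2 * (w % p ^ i) + 1) % p ^ i = 0 := by
      have h1 : (2 * (n % p ^ i) + 2 * (w % p ^ i) + 1) % p ^ i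
          = (2 * n + 2 * w + 1) % p ^ i := by
        conv_rhs => rw [← e1, ← e2]
        rw [show 2 * (n % p ^ i + p ^ i * (n / p ^ i)) + 2 * (w % p ^ i + p ^ i * (w / p ^ i)) + 1
            = 2 * (n % p ^ i) + 2 * (w % p ^ i) + 1 + (2 * (n / p ^ i) + 2 * (w / p ^ i)) * p ^ i
            by ring]
        rw [Nat.add_mul_mod_self_right]
      rw [h1, h, ht, Nat.mul_mod_right]
    obtain ⟨g, hg⟩ : p ^ i ∣ 2 * (n % p ^ i) + 2 * (w % p ^ i) + 1 :=
      Nat.dvd_of_mod_eq_zero hmod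
    have hg3 : g < 3 := by
      have hlt : p ^ i * g < p ^ i * 3 := by
        rw [← hg]
        omega
      exact Nat.lt_of_mul_lt_mul_left hlt
    have hg0 : g ≠ 0 := by
      rintro rfl
      rw [Nat.mul_zero] at hg
      omega
    have hg12 : g = 1 ∨ g = 2 := by omega
    rcases hg12 with rfl | rfl
    · rw [Nat.mul_one] at hg
      omega
    · omega
  · have hle : p ^ a ≤ p ^ i := Nat.pow_le_pow_right (by omega) (by omega)
    have hlt : n < p ^ i := by omega
    rw [Nat.mod_eq_of_lt hlt]
    omega

private lemma not_dvd_centralBinom {p : ℕ} (hp : p.Prime) {n : ℕ} (hfit : Fitt p n) :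
    ¬ p ∣ (2 * n).choose n := by
  rw [← emultiplicity_eq_zero]
  have hkn : n ≤ 2 * n := by omega
  have hb : Nat.log p (2 * n) < Nat.log p (2 * n) + 1 := Nat.lt_succ_self _
  rw [hp.emultiplicity_choose hkn hb]
  have hempty : ({i ∈ Finset.Ico 1 (Nat.log p (2 * n) + 1) |
      p ^ i ≤ n % p ^ i + (2 * n - n) % p ^ i} : Finset ℕ) = ∅ := by
    rw [Finset.filter_eq_empty_iff]
    intro i _
    have h2 : 2 * n - n = n := by omega
    rw [h2]
    have := hfit i
    omega
  rw [hempty]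
  simp

set_option maxHeartbeats 2000000 in
private lemma int_lemma : ∀ (NN p q : ℕ), Odd p → Odd q → 1 < p → 1 < q →
    ∀ (a b : ℕ) (D : ℤ), a + b ≤ NN → q ^ (a - 1) ≤ p ^ b → p ^ (b - 1) ≤ q ^ a →
    2 * D < (q : ℤ) ^ a → -(2 * D) < (p : ℤ) ^ b →
    ∃ v w : ℕ, Fitt q v ∧ Fitt p w ∧ 2 * v < q ^ a ∧ 2 * w < p ^ b ∧ (v : ℤ) - (w : ℤ) = D := by
  intro NN
  induction NN with
  | zero =>
    intro p q hpo hqo hp1 hq1 a b D hab h1 h2 hD1 hD2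
    have ha : a = 0 := by omega
    have hb : b = 0 := by omega
    subst ha; subst hb
    simp only [pow_zero] at hD1 hD2 ⊢
    have hD : D = 0 := by omega
    exact ⟨0, 0, fitt_zero q (by omega), fitt_zero p (by omega), by omega, by omega, by
      rw [hD]; simp⟩
  | succ NN ih =>
    intro p q hpo hqo hp1 hq1 a b D hab h1 h2 hD1 hD2
    rcases Nat.eq_zero_or_pos a with ha0 | ha1
    · -- a = 0 : then b ≤ 1, D ≤ 0
      subst ha0
      simp only [pow_zero] at hD1 h2 ⊢
      have hb1 : b ≤ 1 := by
        by_contra hb2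
        have : p ≤ p ^ (b - 1) := Nat.le_self_pow (by omega) p
        omega
      have hDle : D ≤ 0 := by omega
      refine ⟨0, (-D).toNat, fitt_zero q (by omega), ?_, by omega, ?_, ?_⟩
      · -- Fitt p (-D).toNat
        rcases Nat.eq_zero_or_pos b with hb0 | hbpos
        · subst hb0
          simp only [pow_zero] at hD2
          have : D = 0 := by omega
          rw [this]
          simpa using fitt_zero p (by omega)
        · have hb : b = 1 := by omega
          subst hb
          apply fitt_small (by omega)
          have : ((-D).toNat : ℤ) = -D := Int.toNat_of_nonneg (by omega)
          have h2w : 2 * ((-D).toNat : ℤ) < (p : ℤ) := by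
            rw [this]
            simpa using hD2
          exact_mod_cast h2w
      · -- 2 * (-D).toNat < p ^ b
        have : ((-D).toNat : ℤ) = -D := Int.toNat_of_nonneg (by omega)
        have h2w : 2 * ((-D).toNat : ℤ) < (p : ℤ) ^ b := by
          rw [this]; omega
        have hcast : ((p ^ b : ℕ) : ℤ) = (p : ℤ) ^ b := by push_cast; ring
        have : (2 * ((-D).toNat) : ℤ) < ((p ^ b : ℕ) : ℤ) := by rw [hcast]; exact h2w
        exact_mod_cast this
      · simp [Int.toNat_of_nonneg (show (0:ℤ) ≤ -D by omega)]
    rcases Nat.eq_zero_or_pos b with hb0 | hb1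
    · -- b = 0, a ≥ 1 : then a = 1, D ≥ 0
      subst hb0
      simp only [pow_zero] at hD2 h1 ⊢
      have ha1' : a = 1 := by
        by_contra ha2
        have : q ≤ q ^ (a - 1) := Nat.le_self_pow (by omega) q
        omega
      subst ha1'
      have hDge : 0 ≤ D := by omega
      refine ⟨D.toNat, 0, ?_, fitt_zero p (by omega), ?_, by omega, ?_⟩
      · apply fitt_small (by omega)
        have : (D.toNat : ℤ) = D := Int.toNat_of_nonneg hDge
        have h2v : 2 * (D.toNat : ℤ) < (q : ℤ) := by
          rw [this]
          simpa using hD1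
        exact_mod_cast h2v
      · have : (D.toNat : ℤ) = D := Int.toNat_of_nonneg hDge
        have h2v : 2 * (D.toNat : ℤ) < (q : ℤ) ^ 1 := by rw [this]; exact hD1
        have hcast : ((q ^ 1 : ℕ) : ℤ) = (q : ℤ) ^ 1 := by push_cast; ring
        have : (2 * D.toNat : ℤ) < ((q ^ 1 : ℕ) : ℤ) := by rw [hcast]; exact h2v
        exact_mod_cast this
      · simp [Int.toNat_of_nonneg hDge]
    -- now a ≥ 1 and b ≥ 1
    obtain ⟨a', rfl⟩ : ∃ a', a = a' + 1 := ⟨a - 1, by omega⟩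
    obtain ⟨b', rfl⟩ : ∃ b', b = b' + 1 := ⟨b - 1, by omega⟩
    simp only [Nat.add_sub_cancel] at h1 h2
    -- h1 : q ^ a' ≤ p ^ (b' + 1), h2 : p ^ b' ≤ q ^ (a' + 1)
    by_cases hc : p ^ b' ≤ q ^ a'
    · -- q-step
      set m : ℤ := (q : ℤ) ^ a' with hm
      have hmpos : (0 : ℤ) < m := by positivity
      have hmodd : m % 2 = 1 := by
        have : (q ^ a') % 2 = 1 := Nat.odd_iff.mp hqo.pow
        have hcast : ((q ^ a' : ℕ) : ℤ) = m := by rw [hm]; push_cast; ring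
        omega
      have hqa : (q : ℤ) ^ (a' + 1) = (q : ℤ) * m := by rw [hm, pow_succ]; ring
      -- division setup
      set e : ℤ := (2 * D - m) / (2 * m) with he
      set r : ℤ := (2 * D - m) % (2 * m) with hr
      have hdecomp : 2 * m * e + r = 2 * D - m := by
        rw [he, hr]; exact Int.mul_ediv_add_emod (2 * D - m) (2 * m)
      have hr0 : 0 ≤ r := Int.emod_nonneg _ (by omega)
      have hrlt : r < 2 * m := Int.emod_lt_of_pos _ (by omega)
      set Q2 : ℤ := ((q : ℤ) - 1) / 2 with hQ2
      have hq2 : 2 * Q2 + 1 = (q : ℤ) := by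
        have : (q : ℕ) % 2 = 1 := Nat.odd_iff.mp hqo
        rw [hQ2]
        omega
      set c : ℤ := max 0 (e + 1) with hcdef
      have hc0 : 0 ≤ c := le_max_left _ _
      set D' : ℤ := D - c * m with hD'
      -- bounds on D'
      have hbounds : 2 * D' < m ∧ -(2 * D') < (p : ℤ) ^ (b' + 1) ∧ c ≤ Q2 := by
        have hpbodd : ((p : ℤ) ^ (b' + 1)) % 2 = 1 := by
          have : (p ^ (b' + 1)) % 2 = 1 := Nat.odd_iff.mp hpo.pow
          have hcast : ((p ^ (b' + 1) : ℕ) : ℤ) = (p : ℤ) ^ (b' + 1) := by push_cast; ring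
          omega
        have hh1 : m ≤ (p : ℤ) ^ (b' + 1) := by
          have hcast1 : ((q ^ a' : ℕ) : ℤ) = m := by rw [hm]; push_cast; ring
          have hcast2 : ((p ^ (b' + 1) : ℕ) : ℤ) = (p : ℤ) ^ (b' + 1) := by push_cast; ring
          have := h1
          omega
        rcases le_or_gt (e + 1) 0 with hneg | hpos
        · have hceq : c = 0 := by rw [hcdef]; omega
          have hele : e ≤ -1 := by omega
          have hme : 2 * m * e ≤ 2 * m * (-1) :=
            mul_le_mul_of_nonneg_left hele (by omega)
          have h2Dm : 2 * D < m := by linarith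
          refine ⟨?_, ?_, ?_⟩
          · rw [hD', hceq]
            simp only [zero_mul, sub_zero]
            exact h2Dm
          · rw [hD', hceq]
            simpa using hD2
          · rw [hceq]
            omega
        · have hceq : c = e + 1 := by rw [hcdef]; omega
          have h2D' : 2 * D' = r - m := by
            rw [hD', hceq]
            linear_combination - hdecomp
          refine ⟨by omega, ?_, ?_⟩
          · -- -(2D') = m - r ≤ m ≤ p^(b'+1), strict by parity
            omega
          · -- c ≤ Q2
            have hDle : 2 * D ≤ (q : ℤ) * m - 1 := by
              rw [← hqa]
              omega
            have h2me : 2 * m * e ≤ 2 * D - m := by linarith [hdecomp, hr0]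
            have hqm : (q : ℤ) * m = 2 * Q2 * m + m := by linear_combination m * hq2.symm
            have hlt : 2 * m * e < 2 * m * Q2 := by nlinarith [h2me, hDle, hqm]
            have := lt_of_mul_lt_mul_left hlt (by omega : (0:ℤ) ≤ 2 * m)
            omega
      obtain ⟨hb1', hb2', hcQ⟩ := hbounds
      -- IH at (a', b'+1)
      have hih := ih p q hpo hqo hp1 hq1 a' (b' + 1) D' (by omega)
        (le_trans (Nat.pow_le_pow_right (by omega) (by omega)) h1) hc hb1' hb2'
      obtain ⟨v', w, hvF, hwF, hvlt, hwlt, hvw⟩ := hih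
      refine ⟨c.toNat * q ^ a' + v', w, ?_, hwF, ?_, hwlt, ?_⟩
      · have hcq : 2 * c.toNat < q := by
          have hct : (c.toNat : ℤ) = c := Int.toNat_of_nonneg hc0
          have : 2 * (c.toNat : ℤ) < (q : ℤ) := by omega
          exact_mod_cast this
        exact (fitt_prepend (by omega) hcq hvF hvlt).2
      · have hcq : 2 * c.toNat < q := by
          have hct : (c.toNat : ℤ) = c := Int.toNat_of_nonneg hc0
          have : 2 * (c.toNat : ℤ) < (q : ℤ) := by omega
          exact_mod_cast this
        exact (fitt_prepend (by omega) hcq hvF hvlt).1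
      · -- (c.toNat * q^a' + v' : ℤ) - w = D
        have hct : (c.toNat : ℤ) = c := Int.toNat_of_nonneg hc0
        push_cast
        rw [hct]
        have : (v' : ℤ) - w = D' := hvw
        rw [hD'] at this
        have hcast1 : ((q : ℤ)) ^ a' = m := by rw [hm]
        rw [hcast1]
        linarith
    · -- p-step (mirror)
      push_neg at hc
      set k : ℤ := (p : ℤ) ^ b' with hk
      have hkpos : (0 : ℤ) < k := by positivity
      have hkodd : k % 2 = 1 := by
        have : (p ^ b') % 2 = 1 := Nat.odd_iff.mp hpo.pow
        have hcast : ((p ^ b' : ℕ) : ℤ) = k := by rw [hk]; push_cast; ring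
        omega
      have hpb : (p : ℤ) ^ (b' + 1) = (p : ℤ) * k := by rw [hk, pow_succ]; ring
      set e : ℤ := (-(2 * D) - k) / (2 * k) with he
      set r : ℤ := (-(2 * D) - k) % (2 * k) with hr
      have hdecomp : 2 * k * e + r = -(2 * D) - k := by
        rw [he, hr]; exact Int.mul_ediv_add_emod (-(2 * D) - k) (2 * k)
      have hr0 : 0 ≤ r := Int.emod_nonneg _ (by omega)
      have hrlt : r < 2 * k := Int.emod_lt_of_pos _ (by omega)
      set P2 : ℤ := ((p : ℤ) - 1) / 2 with hP2
      have hp2 : 2 * P2 + 1 = (p : ℤ) := by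
        have : (p : ℕ) % 2 = 1 := Nat.odd_iff.mp hpo
        rw [hP2]
        omega
      set d : ℤ := max 0 (e + 1) with hddef
      have hd0 : 0 ≤ d := le_max_left _ _
      set D' : ℤ := D + d * k with hD'
      have hbounds : -(2 * D') < k ∧ 2 * D' < (q : ℤ) ^ (a' + 1) ∧ d ≤ P2 := by
        have hqaodd : ((q : ℤ) ^ (a' + 1)) % 2 = 1 := by
          have : (q ^ (a' + 1)) % 2 = 1 := Nat.odd_iff.mp hqo.pow
          have hcast : ((q ^ (a' + 1) : ℕ) : ℤ) = (q : ℤ) ^ (a' + 1) := by push_cast; ring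
          omega
        have hh2 : k ≤ (q : ℤ) ^ (a' + 1) := by
          have hcast1 : ((p ^ b' : ℕ) : ℤ) = k := by rw [hk]; push_cast; ring
          have hcast2 : ((q ^ (a' + 1) : ℕ) : ℤ) = (q : ℤ) ^ (a' + 1) := by push_cast; ring
          have := h2
          omega
        rcases le_or_gt (e + 1) 0 with hneg | hpos
        · have hdeq : d = 0 := by rw [hddef]; omega
          have hele : e ≤ -1 := by omega
          have hke : 2 * k * e ≤ 2 * k * (-1) :=
            mul_le_mul_of_nonneg_left hele (by omega)
          have h2Dk : -(2 * D) < k := by linarith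
          refine ⟨?_, ?_, ?_⟩
          · rw [hD', hdeq]
            simp only [zero_mul, add_zero]
            exact h2Dk
          · rw [hD', hdeq]
            simpa using hD1
          · rw [hdeq]
            omega
        · have hdeq : d = e + 1 := by rw [hddef]; omega
          have h2D' : -(2 * D') = r - k := by
            rw [hD', hdeq]
            linear_combination - hdecomp
          refine ⟨by omega, ?_, ?_⟩
          · omega
          · have hDle : -(2 * D) ≤ (p : ℤ) * k - 1 := by
              rw [← hpb]
              omega
            have h2ke : 2 * k * e ≤ -(2 * D) - k := by linarith [hdecomp, hr0]
            have hpk : (p : ℤ) * k = 2 * P2 * k + k := by linear_combination k * hp2.symm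
            have hlt : 2 * k * e < 2 * k * P2 := by nlinarith [h2ke, hDle, hpk]
            have := lt_of_mul_lt_mul_left hlt (by omega : (0:ℤ) ≤ 2 * k)
            omega
      obtain ⟨hb1', hb2', hdP⟩ := hbounds
      -- IH at (a'+1, b')
      have hih := ih p q hpo hqo hp1 hq1 (a' + 1) b' D' (by omega)
        (by simpa using hc.le) (le_trans (Nat.pow_le_pow_right (by omega) (by omega)) h2)
        hb2' hb1'
      obtain ⟨v, w', hvF, hwF, hvlt, hwlt, hvw⟩ := hih
      refine ⟨v, d.toNat * p ^ b' + w', hvF, ?_, hvlt, ?_, ?_⟩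
      · have hdq : 2 * d.toNat < p := by
          have hdt : (d.toNat : ℤ) = d := Int.toNat_of_nonneg hd0
          have : 2 * (d.toNat : ℤ) < (p : ℤ) := by omega
          exact_mod_cast this
        exact (fitt_prepend (by omega) hdq hwF hwlt).2
      · have hdq : 2 * d.toNat < p := by
          have hdt : (d.toNat : ℤ) = d := Int.toNat_of_nonneg hd0
          have : 2 * (d.toNat : ℤ) < (p : ℤ) := by omega
          exact_mod_cast this
        exact (fitt_prepend (by omega) hdq hwF hwlt).1
      · have hdt : (d.toNat : ℤ) = d := Int.toNat_of_nonneg hd0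
        push_cast
        rw [hdt]
        have : (v : ℤ) - w' = D' := hvw
        rw [hD'] at this
        have hcast1 : ((p : ℤ)) ^ b' = k := by rw [hk]
        rw [hcast1]
        linarith

private lemma binom_aux (p : ℕ) (hp1 : 1 < p) : ∀ t : ℕ, p ^ (t + 1) + (t + 1) * p ^ t ≤ (p + 1) ^ (t + 1) := by
  intro t
  induction t with
  | zero => simp
  | succ t ihh =>
    have hpt : 0 < p ^ t := pow_pos (by omega) t
    calc p ^ (t + 2) + (t + 2) * p ^ (t + 1)
        ≤ (p ^ (t + 1) + (t + 1) * p ^ t) * (p + 1) := by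
          have h1 : p ^ (t + 2) = p ^ (t + 1) * p := by rw [pow_succ]
          have h2 : p ^ (t + 1) = p ^ t * p := by rw [pow_succ]
          nlinarith [hpt]
    _ ≤ (p + 1) ^ (t + 1) * (p + 1) := Nat.mul_le_mul_right _ ihh
    _ = (p + 1) ^ (t + 2) := by rw [← pow_succ]

private lemma pow_gap (p q : ℕ) (hp1 : 1 < p) (hpq : p < q) :
    ∃ t : ℕ, q * p ^ t < q ^ t := by
  refine ⟨(q - 1) * p + 1, ?_⟩
  set t : ℕ := (q - 1) * p with ht
  have hq1 : p + 1 ≤ q := by omega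
  have hpt : 0 < p ^ t := pow_pos (by omega) t
  have h1 : p ^ (t + 1) + (t + 1) * p ^ t ≤ (p + 1) ^ (t + 1) := binom_aux p hp1 t
  have h2 : (p + 1) ^ (t + 1) ≤ q ^ (t + 1) := Nat.pow_le_pow_left hq1 _
  have h3 : q * p ^ (t + 1) < p ^ (t + 1) + (t + 1) * p ^ t := by
    have e1 : p ^ (t + 1) = p * p ^ t := by rw [pow_succ]; ring
    -- q * p * p^t < p * p^t + ((q-1)*p + 1) * p^t
    rw [e1]
    have : q * (p * p ^ t) = p * p ^ t + (q - 1) * p * p ^ t := by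
      have : q * (p * p ^ t) = (1 + (q - 1)) * (p * p ^ t) := by
        congr 1
        omega
      rw [this]
      ring
    rw [this]
    have : (t + 1) * p ^ t = (q - 1) * p * p ^ t + p ^ t := by
      rw [ht]
      ring
    omega
  omega

private lemma crossing (p q : ℕ) (hp1 : 1 < p) (hpq : p < q) (A : ℕ) :
    ∃ a b : ℕ, A ≤ a ∧ 1 ≤ a ∧ 1 ≤ b ∧ q ^ (b - 1) ≤ p ^ (a - 1) ∧ p ^ a < q ^ b := by
  have hq1 : 1 < q := by omega
  have hex : ∀ x : ℕ, ∃ b, p ^ x < q ^ b := by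
    intro x
    refine ⟨x + 1, ?_⟩
    calc p ^ x ≤ p ^ (x + 1) := Nat.pow_le_pow_right (by omega) (by omega)
    _ < q ^ (x + 1) := Nat.pow_lt_pow_left hpq (by omega)
  set c : ℕ → ℕ := fun x => Nat.find (hex x) with hcdef
  have hcspec : ∀ x, p ^ x < q ^ (c x) := fun x => Nat.find_spec (hex x)
  have hcmin : ∀ x b', p ^ x < q ^ b' → c x ≤ b' := fun x b' h => Nat.find_le h
  have hc1 : ∀ x, 1 ≤ c x := by
    intro x
    by_contra h
    have hc0 : c x = 0 := by omega
    have := hcspec x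
    rw [hc0, pow_zero] at this
    have : 0 < p ^ x := pow_pos (by omega) x
    omega
  have hcub : ∀ x, q ^ (c x - 1) ≤ p ^ x := by
    intro x
    by_contra h
    push_neg at h
    have := hcmin x (c x - 1) h
    have := hc1 x
    omega
  by_contra hcon
  push_neg at hcon
  set A' : ℕ := max A 1 with hA'
  -- hcon : ∀ a b, A ≤ a → 1 ≤ a → 1 ≤ b → q^(b-1) ≤ p^(a-1) → ¬ p^a < q^b
  have hstep : ∀ x, A' ≤ x → c x + 1 ≤ c (x + 1) := by
    intro x hx
    have h1 := hcon (x + 1) (c (x + 1)) (by omega) (by omega) (hc1 _)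
    have h2 : ¬ q ^ (c (x + 1) - 1) ≤ p ^ (x + 1 - 1) := by
      intro hle
      have hA := h1 hle
      have hB := hcspec (x + 1)
      omega
    push_neg at h2
    simp only [Nat.add_sub_cancel] at h2
    have := hcmin x (c (x + 1) - 1) h2
    have := hc1 (x + 1)
    omega
  have hchain : ∀ t, c A' + t ≤ c (A' + t) := by
    intro t
    induction t with
    | zero => simp
    | succ t ihh =>
      have hh := hstep (A' + t) (by omega)
      have heq : A' + (t + 1) = (A' + t) + 1 := by omega
      rw [heq]
      omega
  obtain ⟨t, hgap⟩ := pow_gap p q hp1 hpq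
  -- contradiction at  t
  have h1 : q ^ (c A' + t) ≤ q ^ (c (A' + t)) := Nat.pow_le_pow_right (by omega) (hchain t)
  have h2 : q ^ (c (A' + t)) ≤ q * p ^ (A' + t) := by
    have hub := hcub (A' + t)
    have h1c := hc1 (A' + t)
    calc q ^ (c (A' + t)) = q * q ^ (c (A' + t) - 1) := by
          rw [← pow_succ']
          congr 1
          omega
    _ ≤ q * p ^ (A' + t) := Nat.mul_le_mul_left q hub
  have h3 : p ^ A' * q ^ t < q ^ (c A' + t) := by
    have := hcspec A'
    calc p ^ A' * q ^ t < q ^ (c A') * q ^ t := by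
          have hpos : 0 < q ^ t := pow_pos (by omega) t
          exact Nat.mul_lt_mul_of_lt_of_le this (le_refl _) hpos
    _ = q ^ (c A' + t) := by rw [← pow_add]
  have h4 : q * p ^ (A' + t) = (q * p ^ t) * p ^ A' := by
    rw [pow_add]
    ring
  -- so p^A' * q^t < (q * p^t) * p^A' : cancel p^A'
  have h5 : p ^ A' * q ^ t < p ^ A' * (q * p ^ t) := by
    calc p ^ A' * q ^ t < q * p ^ (A' + t) := by omega
    _ = p ^ A' * (q * p ^ t) := by rw [pow_add]; ring
  have h6 : q ^ t < q * p ^ t := Nat.lt_of_mul_lt_mul_left h5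
  omega

private lemma main_aux (p q : ℕ) (hp : p.Prime) (hq : q.Prime)
    (hpodd : Odd p) (hqodd : Odd q) (hpq : p < q) (N : ℕ) :
    ∃ n : ℕ, N < n ∧ ¬ p ∣ (2 * n).choose n ∧ ¬ q ∣ (2 * n).choose n := by
  have hp1 : 1 < p := hp.one_lt
  have hq1 : 1 < q := hq.one_lt
  obtain ⟨a, b, hAa, ha1, hb1, hx, hy⟩ := crossing p q hp1 hpq (N + 2)
  have hqb_odd : q ^ b % 2 = 1 := Nat.odd_iff.mp hqodd.pow
  have hpa_odd : p ^ a % 2 = 1 := Nat.odd_iff.mp hpodd.pow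
  obtain ⟨dd, hd⟩ : ∃ dd : ℕ, 2 * dd + p ^ a = q ^ b := ⟨(q ^ b - p ^ a) / 2, by omega⟩
  have hpa1 : 0 < p ^ a := pow_pos (by omega) a
  have hpaa1 : 0 < p ^ (a - 1) := pow_pos (by omega) (a - 1)
  -- apply int_lemma with exponent roles (b, a-1)
  have h2' : p ^ (a - 1 - 1) ≤ q ^ b :=
    le_trans (Nat.pow_le_pow_right (by omega) (by omega)) (le_of_lt hy)
  have hD1 : 2 * (dd : ℤ) < (q : ℤ) ^ b := by
    have hcast : ((q ^ b : ℕ) : ℤ) = (q : ℤ) ^ b := by push_cast; ring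
    omega
  have hD2 : -(2 * (dd : ℤ)) < (p : ℤ) ^ (a - 1) := by
    have hcast : ((p ^ (a - 1) : ℕ) : ℤ) = (p : ℤ) ^ (a - 1) := by push_cast; ring
    omega
  obtain ⟨v, w, hvF, hwF, hvlt, hwlt, hvw⟩ :=
    int_lemma (b + (a - 1)) p q hpodd hqodd hp1 hq1 b (a - 1) (dd : ℤ)
      le_rfl hx h2' hD1 hD2
  -- construct n
  obtain ⟨mm, hmm⟩ := hpodd.pow (n := a)
  have hwm : w ≤ mm := by
    have : p ^ (a - 1) ≤ p ^ a := Nat.pow_le_pow_right (by omega) (by omega)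
    omega
  refine ⟨mm - w, ?_, ?_, ?_⟩
  · -- N < mm - w
    have h3p : 3 ≤ p := by
      have := Nat.odd_iff.mp hpodd
      have := hp.two_le
      omega
    have hpow3 : 3 * p ^ (a - 1) ≤ p ^ a := by
      calc 3 * p ^ (a - 1) ≤ p * p ^ (a - 1) := Nat.mul_le_mul_right _ h3p
      _ = p ^ (a - 1 + 1) := by rw [pow_succ]; ring
      _ = p ^ a := by congr 1; omega
    have hNlt : N < p ^ (a - 1) := by
      have hN2 : N < 2 ^ (N + 1) := lt_of_lt_of_le (Nat.lt_two_pow_self (n := N))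
        (Nat.pow_le_pow_right (by omega) (by omega))
      have hle1 : (2 : ℕ) ^ (N + 1) ≤ p ^ (N + 1) := Nat.pow_le_pow_left (by omega) _
      have hle2 : p ^ (N + 1) ≤ p ^ (a - 1) := Nat.pow_le_pow_right (by omega) (by omega)
      omega
    omega
  · -- p does not divide
    apply not_dvd_centralBinom hp
    apply fitt_comp hpodd hp1 (a := a) (w := w) _ hwF
    omega
  · -- q does not divide
    apply not_dvd_centralBinom hq
    apply fitt_comp hqodd hq1 (a := b) (w := v) _ hvF
    -- 2 * (mm - w) + 2 * v + 1 = q ^ b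
    have hvweq : (v : ℤ) = (w : ℤ) + (dd : ℤ) := by omega
    have hvn : v = w + dd := by exact_mod_cast hvweq
    omega

/-- For distinct odd primes `p`, `q`, there are infinitely many positive integers `n`
such that `gcd(pq, binomial(2n,n)) = 1`. -/
theorem infinitely_many_coprime_central_binom (p q : ℕ) (hp : p.Prime) (hq : q.Prime)
    (hpodd : Odd p) (hqodd : Odd q) (hpq : p ≠ q) :
    ∀ N : ℕ, ∃ n : ℕ, N < n ∧ Nat.gcd (p * q) ((2 * n).choose n) = 1 := by
  intro N
  have key : ∃ n : ℕ, N < n ∧ ¬ p ∣ (2 * n).choose n ∧ ¬ q ∣ (2 * n).choose n := by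
    rcases lt_or_gt_of_ne hpq with h | h
    · exact main_aux p q hp hq hpodd hqodd h N
    · obtain ⟨n, hn, h1, h2⟩ := main_aux q p hq hp hqodd hpodd h N
      exact ⟨n, hn, h2, h1⟩
  obtain ⟨n, hn, hnp, hnq⟩ := key
  refine ⟨n, hn, ?_⟩
  have hcp : Nat.Coprime p ((2 * n).choose n) := (Nat.Prime.coprime_iff_not_dvd hp).mpr hnp
  have hcq : Nat.Coprime q ((2 * n).choose n) := (Nat.Prime.coprime_iff_not_dvd hq).mpr hnq
  exact Nat.coprime_mul_iff_left.mpr ⟨hcp, hcq⟩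
end

section
/- There are infinitely many triples (x, y, z) of natural numbers such that x + y = z, every base-3 digit of x lies in {0, 1}, every base-4 digit of y lies in {0, 1}, and every base-5 digit of z lies in {0, 1}. -/
namespace RDS

/-- All base-`b` digits of `x` are at most 1 (division/mod form). -/
def Good (b x : ℕ) : Prop := ∀ i, x / b ^ i % b ≤ 1

lemma good_zero (b : ℕ) : Good b 0 := by
  intro i; simp

lemma good_of_le_one {b x : ℕ} (hx : x ≤ 1) : Good b x := by
  intro i
  exact le_trans (Nat.mod_le _ _) (le_trans (Nat.div_le_self _ _) hx)

lemma good_shift {b : ℕ} (hb : 2 ≤ b) (k x : ℕ) (hx : x < b ^ k) (hg : Good b x) :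
    Good b (b ^ k + x) := by
  intro i
  rcases lt_trichotomy i k with h | h | h
  · have hk : b ^ k = b ^ i * b ^ (k - i) := by
      rw [← pow_add]; congr 1; omega
    have hpos : 0 < b ^ i := pow_pos (by omega) i
    rw [hk, Nat.mul_add_div hpos]
    have hki : b ^ (k - i) = b * b ^ (k - i - 1) := by
      rw [← pow_succ']; congr 1; omega
    rw [hki, Nat.mul_add_mod]
    exact hg i
  · subst h
    have hpos : 0 < b ^ i := pow_pos (by omega) i
    have h1 : (b ^ i + x) / b ^ i = 1 + x / b ^ i := by
      have := Nat.mul_add_div hpos 1 x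
      simpa using this
    rw [h1, Nat.div_eq_of_lt hx]
    simpa using Nat.mod_le 1 b
  · have hlt : b ^ k + x < b ^ i := by
      have h2 : b ^ k + x < 2 * b ^ k := by omega
      have h3 : 2 * b ^ k ≤ b * b ^ k := Nat.mul_le_mul_right _ hb
      have h4 : b * b ^ k = b ^ (k + 1) := (pow_succ' b k).symm
      have h5 : b ^ (k + 1) ≤ b ^ i := Nat.pow_le_pow_right (by omega) (by omega)
      omega
    rw [Nat.div_eq_of_lt hlt]
    simp

lemma good_digits {b : ℕ} (hb : 1 < b) : ∀ x, Good b x → ∀ d ∈ Nat.digits b x, d ≤ 1 := by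
  intro x
  induction x using Nat.strong_induction_on with
  | _ x ih =>
    intro hg d hd
    rcases Nat.eq_zero_or_pos x with rfl | hx
    · simp at hd
    · rw [Nat.digits_def' hb hx] at hd
      rcases List.mem_cons.mp hd with rfl | hd'
      · simpa using hg 0
      · have hlt : x / b < x := Nat.div_lt_self hx hb
        refine ih (x / b) hlt ?_ d hd'
        intro i
        have e : x / b / b ^ i = x / b ^ (i + 1) := by
          rw [Nat.div_div_eq_div_mul, ← pow_succ']
        rw [e]
        exact hg (i + 1)

def S3 : ℕ → ℕ
  | 0 => 0
  | a + 1 => 3 * S3 a + 1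

def S4 : ℕ → ℕ
  | 0 => 0
  | b + 1 => 4 * S4 b + 1

lemma S3_eq : ∀ a, 2 * S3 a + 1 = 3 ^ a
  | 0 => by simp [S3]
  | a + 1 => by
    have h := S3_eq a
    simp only [S3, pow_succ]
    omega

lemma S4_eq : ∀ b, 3 * S4 b + 1 = 4 ^ b
  | 0 => by simp [S4]
  | b + 1 => by
    have h := S4_eq b
    simp only [S4, pow_succ]
    omega

/-- Export condition: the auxiliary 5-part `z` is zero, or has a top power `5^e` with
`z < (5/4)·5^e` and `5^e < D`. Kept as a `def` so that `omega` ignores it. -/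
def Bound (D z : ℕ) : Prop :=
  z = 0 ∨ ∃ e : ℕ, 5 ^ e ≤ z ∧ 4 * z ≤ 5 * 5 ^ e ∧ 5 ^ e < D

lemma bound_zero (D : ℕ) : Bound D 0 := Or.inl rfl

lemma bound_mk {D z e : ℕ} (h1 : 5 ^ e ≤ z) (h2 : 4 * z ≤ 5 * 5 ^ e) (h3 : 5 ^ e < D) :
    Bound D z := Or.inr ⟨e, h1, h2, h3⟩

lemma bound_elim {D z : ℕ} (h : Bound D z) :
    z = 0 ∨ ∃ e : ℕ, 5 ^ e ≤ z ∧ 4 * z ≤ 5 * 5 ^ e ∧ 5 ^ e < D := h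

lemma bound_mono {D D' z : ℕ} (h : Bound D z) (hD : D ≤ D') : Bound D' z := by
  rcases h with h | ⟨e, a1, a2, a3⟩
  · exact Or.inl h
  · exact Or.inr ⟨e, a1, a2, lt_of_lt_of_le a3 hD⟩

lemma ex_pow5 {L : ℕ} (hL : 1 ≤ L) :
    ∃ P e : ℕ, P = 5 ^ e ∧ L ≤ P ∧ (P = 1 ∨ P + 5 ≤ 5 * L) := by
  refine ⟨5 ^ Nat.clog 5 L, Nat.clog 5 L, rfl, Nat.le_pow_clog (by norm_num) L, ?_⟩
  rcases Nat.lt_or_ge L 2 with hl | hl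
  · have hL1 : L = 1 := by omega
    subst hL1
    left
    rw [Nat.clog_one_right, pow_zero]
  · right
    have hpred : 5 ^ (Nat.clog 5 L - 1) < L := Nat.pow_pred_clog_lt_self (by norm_num) hl
    have hc0 : Nat.clog 5 L ≠ 0 := by
      intro h0
      have h := Nat.le_pow_clog (show 1 < 5 by norm_num) L
      rw [h0, pow_zero] at h
      omega
    obtain ⟨c, hc⟩ : ∃ c, Nat.clog 5 L = c + 1 := ⟨Nat.clog 5 L - 1, by omega⟩
    have hpred' : 5 ^ c < L := by
      have hcc : Nat.clog 5 L - 1 = c := by omega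
      rwa [hcc] at hpred
    rw [hc, pow_succ]
    omega

lemma main : ∀ s a b D : ℕ, a + b ≤ s →
    3 ^ a ≤ 3 * 4 ^ b → 4 ^ b ≤ 4 * 3 ^ a → D ≤ S3 a + S4 b →
    ∃ x y z : ℕ, Good 3 x ∧ x < 3 ^ a ∧ Good 4 y ∧ y < 4 ^ b ∧ Good 5 z ∧
      x + y = D + z ∧ Bound D z := by
  intro s
  induction s with
  | zero =>
    intro a b D hs h1 h2 hD
    have ha : a = 0 := by omega
    have hb : b = 0 := by omega
    subst ha; subst hb
    have hD0 : D = 0 := by simpa [S3, S4] using hD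
    subst hD0
    exact ⟨0, 0, 0, good_zero 3, by norm_num, good_zero 4, by norm_num, good_zero 5,
      by norm_num, bound_zero 0⟩
  | succ s ih =>
    intro a b D hs h1 h2 hD
    cases a with
    | zero =>
      have s4 : 3 * S4 b + 1 = 4 ^ b := S4_eq b
      have hb4 : (4:ℕ) ^ b ≤ 4 := by simpa using h2
      have hS3 : S3 0 = 0 := rfl
      rw [hS3] at hD
      have hD1 : D ≤ 1 := by omega
      exact ⟨0, D, 0, good_zero 3, by norm_num, good_of_le_one hD1, by omega, good_zero 5,
        by omega, bound_zero D⟩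
    | succ a =>
      cases b with
      | zero =>
        have s3 : 2 * S3 (a+1) + 1 = 3 ^ (a+1) := S3_eq (a+1)
        have hb3 : (3:ℕ) ^ (a+1) ≤ 3 := by simpa using h1
        have hS4 : S4 0 = 0 := rfl
        rw [hS4] at hD
        have hD1 : D ≤ 1 := by omega
        exact ⟨D, 0, 0, good_of_le_one hD1, by omega, good_zero 4, by norm_num, good_zero 5,
          by omega, bound_zero D⟩
      | succ b =>
        have e3 : (3:ℕ) ^ (a+1) = 3 * 3 ^ a := by rw [pow_succ]; ring
        have e4 : (4:ℕ) ^ (b+1) = 4 * 4 ^ b := by rw [pow_succ]; ring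
        have s3 : 2 * S3 a + 1 = 3 ^ a := S3_eq a
        have s4 : 3 * S4 b + 1 = 4 ^ b := S4_eq b
        have s3' : 2 * S3 (a+1) + 1 = 3 ^ (a+1) := S3_eq (a+1)
        have s4' : 3 * S4 (b+1) + 1 = 4 ^ (b+1) := S4_eq (b+1)
        have d3 : S3 (a+1) = 3 * S3 a + 1 := rfl
        have d4 : S4 (b+1) = 4 * S4 b + 1 := rfl
        by_cases hcmp : 4 ^ b ≤ 3 ^ a
        · -- head token is 3^a
          have h1' : (3:ℕ) ^ a ≤ 3 * 4 ^ (b+1) := by omega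
          have h2' : (4:ℕ) ^ (b+1) ≤ 4 * 3 ^ a := by omega
          by_cases htake : 3 ^ a ≤ D
          · obtain ⟨x', y, z, gx, hxlt, gy, hylt, gz, hsum, hPO⟩ :=
              ih a (b+1) (D - 3 ^ a) (by omega) h1' h2' (by omega)
            exact ⟨3 ^ a + x', y, z, good_shift (by norm_num) a x' hxlt gx, by omega,
              gy, hylt, gz, by omega, bound_mono hPO (Nat.sub_le _ _)⟩
          · by_cases hskip : D ≤ S3 a + S4 (b+1)
            · obtain ⟨x', y, z, gx, hxlt, gy, hylt, gz, hsum, hPO⟩ :=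
                ih a (b+1) D (by omega) h1' h2' hskip
              exact ⟨x', y, z, gx, by omega, gy, hylt, gz, hsum, hPO⟩
            · -- EVENT at q = 3^a
              have hDq : D < 3 ^ a := by omega
              have hstuck : S3 a + S4 (b+1) < D := by omega
              have hq4 : (3:ℕ) ^ a ≤ 4 ^ (b+1) := by omega
              have hSig : 5 * 3 ^ a ≤ 6 * (S3 a + S4 (b+1)) + 5 := by omega
              obtain ⟨P, e0, hPeq, hPL, hPub⟩ := ex_pow5 (L := 3 ^ a - D) (by omega)
              have hS4pos : 1 ≤ S4 (b+1) := by omega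
              have h5L : 5 * (3 ^ a - D) + 1 ≤ D := by omega
              have h4L : 4 * (3 ^ a - D) ≤ (S3 a + S4 (b+1)) + 5 := by omega
              have hPS : P ≤ (3 ^ a - D) + (S3 a + S4 (b+1)) := by
                rcases hPub with h | h <;> omega
              have hPD : P < D := by
                rcases hPub with h | h <;> omega
              obtain ⟨x', y, z', gx, hxlt, gy, hylt, gz, hsum, hPO⟩ :=
                ih a (b+1) (P - (3 ^ a - D)) (by omega) h1' h2' (by omega)
              have hz' : 4 * z' ≤ P ∧ z' < P := by
                rcases bound_elim hPO with rfl | ⟨e', he1, he2, he3⟩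
                · constructor <;> omega
                · have h1e : (5:ℕ) ^ e' < 5 ^ e0 := by
                    rw [← hPeq]
                    exact lt_of_lt_of_le he3 (Nat.sub_le _ _)
                  have h2e : e' < e0 := (Nat.pow_lt_pow_iff_right (by norm_num)).mp h1e
                  have h3e : (5:ℕ) ^ (e' + 1) ≤ 5 ^ e0 :=
                    Nat.pow_le_pow_right (by norm_num) (by omega)
                  rw [pow_succ, ← hPeq] at h3e
                  obtain ⟨Q, hQeq⟩ : ∃ Q : ℕ, Q = 5 ^ e' := ⟨_, rfl⟩
                  rw [← hQeq] at he1 he2 h3e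
                  have hQ1 : 1 ≤ Q := by
                    rw [hQeq]; exact pow_pos (by norm_num : (0:ℕ) < 5) _
                  clear hQeq h1e h2e hPeq
                  constructor <;> omega
              have gz2 : Good 5 (P + z') := by
                rw [hPeq]
                refine good_shift (by norm_num) e0 z' ?_ gz
                rw [← hPeq]; exact hz'.2
              refine ⟨3 ^ a + x', y, P + z',
                good_shift (by norm_num) a x' hxlt gx, by omega, gy, hylt, gz2,
                by omega, bound_mk (e := e0) ?_ ?_ ?_⟩
              · rw [← hPeq]; omega
              · rw [← hPeq]; omega
              · rw [← hPeq]; exact hPD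
        · -- head token is 4^b
          have hcmp' : (3:ℕ) ^ a < 4 ^ b := by omega
          have h1' : (3:ℕ) ^ (a+1) ≤ 3 * 4 ^ b := by omega
          have h2' : (4:ℕ) ^ b ≤ 4 * 3 ^ (a+1) := by omega
          by_cases htake : 4 ^ b ≤ D
          · obtain ⟨x, y', z, gx, hxlt, gy, hylt, gz, hsum, hPO⟩ :=
              ih (a+1) b (D - 4 ^ b) (by omega) h1' h2' (by omega)
            exact ⟨x, 4 ^ b + y', z, gx, hxlt,
              good_shift (by norm_num) b y' hylt gy, by omega, gz, by omega,
              bound_mono hPO (Nat.sub_le _ _)⟩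
          · by_cases hskip : D ≤ S3 (a+1) + S4 b
            · obtain ⟨x, y', z, gx, hxlt, gy, hylt, gz, hsum, hPO⟩ :=
                ih (a+1) b D (by omega) h1' h2' hskip
              exact ⟨x, y', z, gx, hxlt, gy, by omega, gz, hsum, hPO⟩
            · -- EVENT at q = 4^b
              have hDq : D < 4 ^ b := by omega
              have hstuck : S3 (a+1) + S4 b < D := by omega
              have hq3 : (4:ℕ) ^ b ≤ 3 ^ (a+1) := by omega
              have hSig : 5 * 4 ^ b ≤ 6 * (S3 (a+1) + S4 b) + 5 := by omega
              obtain ⟨P, e0, hPeq, hPL, hPub⟩ := ex_pow5 (L := 4 ^ b - D) (by omega)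
              have hS3pos : 1 ≤ S3 (a+1) := by omega
              have h5L : 5 * (4 ^ b - D) + 1 ≤ D := by omega
              have h4L : 4 * (4 ^ b - D) ≤ (S3 (a+1) + S4 b) + 5 := by omega
              have hPS : P ≤ (4 ^ b - D) + (S3 (a+1) + S4 b) := by
                rcases hPub with h | h <;> omega
              have hPD : P < D := by
                rcases hPub with h | h <;> omega
              obtain ⟨x, y', z', gx, hxlt, gy, hylt, gz, hsum, hPO⟩ :=
                ih (a+1) b (P - (4 ^ b - D)) (by omega) h1' h2' (by omega)
              have hz' : 4 * z' ≤ P ∧ z' < P := by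
                rcases bound_elim hPO with rfl | ⟨e', he1, he2, he3⟩
                · constructor <;> omega
                · have h1e : (5:ℕ) ^ e' < 5 ^ e0 := by
                    rw [← hPeq]
                    exact lt_of_lt_of_le he3 (Nat.sub_le _ _)
                  have h2e : e' < e0 := (Nat.pow_lt_pow_iff_right (by norm_num)).mp h1e
                  have h3e : (5:ℕ) ^ (e' + 1) ≤ 5 ^ e0 :=
                    Nat.pow_le_pow_right (by norm_num) (by omega)
                  rw [pow_succ, ← hPeq] at h3e
                  obtain ⟨Q, hQeq⟩ : ∃ Q : ℕ, Q = 5 ^ e' := ⟨_, rfl⟩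
                  rw [← hQeq] at he1 he2 h3e
                  have hQ1 : 1 ≤ Q := by
                    rw [hQeq]; exact pow_pos (by norm_num : (0:ℕ) < 5) _
                  clear hQeq h1e h2e hPeq
                  constructor <;> omega
              have gz2 : Good 5 (P + z') := by
                rw [hPeq]
                refine good_shift (by norm_num) e0 z' ?_ gz
                rw [← hPeq]; exact hz'.2
              refine ⟨x, 4 ^ b + y', P + z', gx, hxlt,
                good_shift (by norm_num) b y' hylt gy, by omega, gz2,
                by omega, bound_mk (e := e0) ?_ ?_ ?_⟩
              · rw [← hPeq]; omega
              · rw [← hPeq]; omega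
              · rw [← hPeq]; exact hPD


theorem exists_solution (N : ℕ) :
    ∃ x y : ℕ, N < x + y ∧ Good 3 x ∧ Good 4 y ∧ Good 5 (x + y) := by
  set n := N + 1 with hn
  set B := Nat.log 4 (5 ^ n) with hB
  set b0 := B + 2 with hb0
  set a0 := Nat.log 3 (4 ^ b0) + 1 with ha0
  have hb4 : (5:ℕ) ^ n < 4 ^ (B + 1) := Nat.lt_pow_succ_log_self (by norm_num) _
  have h4b0 : (4:ℕ) ^ b0 = 4 * 4 ^ (B + 1) := by rw [hb0, pow_succ]; ring
  have h3a : (4:ℕ) ^ b0 < 3 ^ a0 := by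
    rw [ha0]
    exact Nat.lt_pow_succ_log_self (by norm_num) _
  have h3log : (3:ℕ) ^ (a0 - 1) ≤ 4 ^ b0 := by
    have : a0 - 1 = Nat.log 3 (4 ^ b0) := by rw [ha0]; omega
    rw [this]
    exact Nat.pow_log_le_self 3 (by positivity)
  have h3b : (3:ℕ) ^ a0 ≤ 3 * 4 ^ b0 := by
    have ha1 : a0 = (a0 - 1) + 1 := by rw [ha0]; omega
    rw [ha1, pow_succ]
    have := h3log
    omega
  have hInv2 : (4:ℕ) ^ b0 ≤ 4 * 3 ^ a0 := by omega
  have s3a : 2 * S3 a0 + 1 = 3 ^ a0 := S3_eq a0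
  have hPre : 5 ^ n ≤ S3 a0 + S4 b0 := by omega
  obtain ⟨x, y, z, gx, hxlt, gy, hylt, gz, hsum, hPO⟩ :=
    main (a0 + b0) a0 b0 (5 ^ n) le_rfl h3b hInv2 hPre
  have hp5 : (0:ℕ) < 5 ^ n := by positivity
  have hzlt : z < 5 ^ n := by
    rcases bound_elim hPO with rfl | ⟨e, he1, he2, he3⟩
    · omega
    · have h2e : e < n := (Nat.pow_lt_pow_iff_right (by norm_num)).mp he3
      have h3e : (5:ℕ) ^ (e + 1) ≤ 5 ^ n := Nat.pow_le_pow_right (by norm_num) (by omega)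
      rw [pow_succ] at h3e
      obtain ⟨Q, hQeq⟩ : ∃ Q : ℕ, Q = 5 ^ e := ⟨_, rfl⟩
      rw [← hQeq] at he1 he2 h3e
      omega
  refine ⟨x, y, ?_, gx, gy, ?_⟩
  · have hNn : N < 5 ^ n := by
      have h1 : n < 5 ^ n := Nat.lt_pow_self (by norm_num)
      omega
    omega
  · have hxy : x + y = 5 ^ n + z := hsum
    rw [hxy]
    exact good_shift (by norm_num) n z hzlt gz

end RDS

/-- There are infinitely many triples (x, y, z) of natural numbers with x + y = z such that
every base-3 digit of x, every base-4 digit of y, and every base-5 digit of z lies in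
{0, …, 1}. -/
theorem infinitely_many_restricted_digit_sums :
    ∀ N : ℕ, ∃ x y z : ℕ, N < z ∧ x + y = z ∧
      (∀ d ∈ Nat.digits 3 x, d ≤ 1) ∧
      (∀ d ∈ Nat.digits 4 y, d ≤ 1) ∧
      (∀ d ∈ Nat.digits 5 z, d ≤ 1) := by
  intro N
  obtain ⟨x, y, hlt, gx, gy, gz⟩ := RDS.exists_solution N
  exact ⟨x, y, x + y, hlt, rfl,
    RDS.good_digits (by norm_num) x gx,
    RDS.good_digits (by norm_num) y gy,
    RDS.good_digits (by norm_num) (x + y) gz⟩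
end

section
/- Let k ≥ 2 be an integer. Then there exists an integer M ≥ 1 such that for every k-tuple of multiplicatively independent integers b_1, …, b_k with b_i ≥ M for all i, there are infinitely many positive integers n with the property that for each i ∈ {1, …, k}, every base-b_i digit of n is nonzero. -/
/-- Integers `b 0, …, b (k-1)` (all `≥ 2`) are multiplicatively independent if the reals
`1, log (b 1) / log (b 0), …, log (b (k-1)) / log (b 0)` are linearly independent over `ℚ`. -/
def MultiplicativelyIndependent {k : ℕ} (b : Fin k → ℕ) : Prop :=
  LinearIndependent ℚ
    (fun i : Fin k =>
      if i.val = 0 then (1 : ℝ)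
      else Real.log (b i) / Real.log (b ⟨0, Nat.pos_of_ne_zero (by
        rintro rfl; exact absurd i.2 (Nat.not_lt_zero _))⟩))


private lemma div_add_div_le' (A C q : ℕ) (hq : 0 < q) : (A + C) / q ≤ A / q + C / q + 1 := by
  have h1 := Nat.div_add_mod A q
  have h2 := Nat.div_add_mod C q
  have h3 : A % q < q := Nat.mod_lt _ hq
  have h4 : C % q < q := Nat.mod_lt _ hq
  have : (A + C) / q < A / q + C / q + 2 := by
    rw [Nat.div_lt_iff_lt_mul hq]
    nlinarith [h1, h2, h3, h4]
  omega

/-- digit criterion: if every truncated remainder is large enough, all digits are nonzero -/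
private lemma digits_nonzero (c : ℕ) (hc : 2 ≤ c) :
    ∀ n, 0 < n → (∀ j : ℕ, c ^ (j+1) ≤ n → c ^ j ≤ n % c ^ (j+1)) →
    ∀ d ∈ Nat.digits c n, d ≠ 0 := by
  intro n
  induction n using Nat.strong_induction_on with
  | _ n ih =>
    intro hn H d hd
    rw [Nat.digits_def' (by omega : 1 < c) hn] at hd
    rcases List.mem_cons.mp hd with h | h
    · subst h
      by_cases hcn : c ≤ n
      · have h0 := H 0 (by simpa using hcn)
        simp only [pow_zero, zero_add, pow_one] at h0
        omega
      · push_neg at hcn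
        rw [Nat.mod_eq_of_lt hcn]
        omega
    · by_cases hnc : 0 < n / c
      · refine ih (n / c) (Nat.div_lt_self hn (by omega)) hnc ?_ d h
        intro j hj
        have hcc : c ^ (j+2) ≤ n := by
          have h5 : c ^ (j+1) * c ≤ (n / c) * c := Nat.mul_le_mul_right c hj
          calc c ^ (j+2) = c ^ (j+1) * c := by ring
          _ ≤ (n / c) * c := h5
          _ ≤ n := Nat.div_mul_le_self n c
        have hkey : (n / c) % c ^ (j+1) = n % c ^ (j+2) / c := by
          rw [← Nat.mod_mul_right_div_self]
          congr 1
          ring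
        rw [hkey]
        have h6 := H (j+1) hcc
        calc c ^ j = c ^ (j+1) / c := by
              rw [pow_succ, Nat.mul_div_cancel _ (by omega)]
        _ ≤ n % c ^ (j+2) / c := Nat.div_le_div_right h6
      · have h7 : n / c = 0 := Nat.le_zero.mp (Nat.not_lt.mp hnc)
        rw [h7] at h
        simp at h

/-- Counting points of an arithmetic progression falling in residue intervals. -/
private lemma count_ap (D P q W x : ℕ) (hP : 0 < P) (hq : 0 < q) :
    ((Finset.range D).filter (fun u => (x + u * P) % q < W)).card
      ≤ (D * P / q + 2) * (W / P + 2) := by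
  classical
  set S := (Finset.range D).filter (fun u => (x + u * P) % q < W) with hSdef
  have hsub : S ⊆ (Finset.Icc (x / q) ((x + D * P) / q)).biUnion
      (fun m => S.filter (fun u => (x + u * P) / q = m)) := by
    intro u hu
    rw [Finset.mem_biUnion]
    refine ⟨(x + u * P) / q, ?_, ?_⟩
    · rw [Finset.mem_Icc]
      constructor
      · exact Nat.div_le_div_right (Nat.le_add_right _ _)
      · apply Nat.div_le_div_right
        have hu' : u < D := by
          have := Finset.mem_filter.mp hu
          exact Finset.mem_range.mp this.1
        have : u * P ≤ D * P := Nat.mul_le_mul_right P (le_of_lt hu')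
        omega
    · rw [Finset.mem_filter]
      exact ⟨hu, rfl⟩
  have hper : ∀ m, (S.filter (fun u => (x + u * P) / q = m)).card ≤ W / P + 1 := by
    intro m
    set Sm := S.filter (fun u => (x + u * P) / q = m) with hSm
    rcases Sm.eq_empty_or_nonempty with he | hne
    · simp [he]
    · set u₀ := Sm.min' hne with hu₀
      have hmem₀ : u₀ ∈ Sm := Sm.min'_mem hne
      have hsub2 : Sm ⊆ Finset.Icc u₀ (u₀ + W / P) := by
        intro u hu
        rw [Finset.mem_Icc]
        have hle : u₀ ≤ u := Sm.min'_le u hu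
        refine ⟨hle, ?_⟩
        by_contra hcon
        push_neg at hcon
        have h₀ := Finset.mem_filter.mp hmem₀
        have h₁ := Finset.mem_filter.mp hu
        have hq₀ : (x + u₀ * P) / q = m := h₀.2
        have hq₁ : (x + u * P) / q = m := h₁.2
        have hr₀ : (x + u₀ * P) % q < W := (Finset.mem_filter.mp h₀.1).2
        have hr₁ : (x + u * P) % q < W := (Finset.mem_filter.mp h₁.1).2
        -- x + u*P = q*m + r₁ ; x + u₀*P = q*m + r₀
        have e₁ : q * m + (x + u * P) % q = x + u * P := by
          conv_rhs => rw [← Nat.div_add_mod (x + u * P) q]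
          rw [hq₁]
        have e₀ : q * m + (x + u₀ * P) % q = x + u₀ * P := by
          conv_rhs => rw [← Nat.div_add_mod (x + u₀ * P) q]
          rw [hq₀]
        -- u*P = u₀*P + (u - u₀)*P
        have hsplit : u * P = u₀ * P + (u - u₀) * P := by
          rw [← Nat.add_mul, Nat.add_sub_cancel' hle]
        -- r₁ = r₀ + (u-u₀)*P
        have hrr : (x + u * P) % q = (x + u₀ * P) % q + (u - u₀) * P := by
          have := e₁
          rw [hsplit] at this
          omega
        -- (u - u₀)*P ≥ (W/P + 1)*P > W
        have hbig : (W / P + 1) * P ≤ (u - u₀) * P := by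
          apply Nat.mul_le_mul_right
          omega
        have hWlt : W < (W / P + 1) * P := by
          have ha := Nat.div_add_mod W P
          have hb : W % P < P := Nat.mod_lt _ hP
          have hc : (W / P + 1) * P = P * (W / P) + P := by ring
          omega
        omega
      calc Sm.card ≤ (Finset.Icc u₀ (u₀ + W / P)).card := Finset.card_le_card hsub2
      _ ≤ W / P + 1 := by
          rw [Nat.card_Icc, Nat.add_assoc, Nat.add_sub_cancel_left]
  have hcard1 : S.card ≤ (Finset.Icc (x / q) ((x + D * P) / q)).card * (W / P + 1) := by
    calc S.card ≤ ((Finset.Icc (x / q) ((x + D * P) / q)).biUnion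
        (fun m => S.filter (fun u => (x + u * P) / q = m))).card := Finset.card_le_card hsub
    _ ≤ ∑ m ∈ Finset.Icc (x / q) ((x + D * P) / q),
        (S.filter (fun u => (x + u * P) / q = m)).card := Finset.card_biUnion_le
    _ ≤ ∑ _m ∈ Finset.Icc (x / q) ((x + D * P) / q), (W / P + 1) :=
        Finset.sum_le_sum (fun m _ => hper m)
    _ = (Finset.Icc (x / q) ((x + D * P) / q)).card * (W / P + 1) := by
        rw [Finset.sum_const, smul_eq_mul]
  have hIcc : (Finset.Icc (x / q) ((x + D * P) / q)).card ≤ D * P / q + 2 := by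
    rw [Nat.card_Icc]
    have h9 := div_add_div_le' x (D * P) q hq
    revert h9
    generalize x / q = e
    generalize D * P / q = f
    generalize (x + D * P) / q = g
    intro h9
    omega
  calc S.card ≤ (Finset.Icc (x / q) ((x + D * P) / q)).card * (W / P + 1) := hcard1
  _ ≤ (D * P / q + 2) * (W / P + 2) := Nat.mul_le_mul hIcc (by omega)

private lemma window_choice (k B T t : ℕ) (b : Fin k → ℕ)
    (hk : 1 ≤ k) (hB : 2^17 * k^2 ≤ B) (hbB : ∀ i, B ≤ b i)
    (hT : 0 < T) (ht : t < T) (x : ℕ) :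
    ∃ u, 1 ≤ u ∧ u < B^3 ∧ ∀ i : Fin k, ∀ j : ℕ, j < 3*T → (b i)^(j+1) ≤ B^(3*T) →
      Nat.findGreatest (fun m => 2^10 * k * B^(3*m) ≤ (b i)^(j+1)) (T-1) = t →
      ((b i)^j ≤ (x + u * B^(3*t)) % (b i)^(j+1) ∧
       (x + u * B^(3*t)) % (b i)^(j+1) + B^(3*t) ≤ (b i)^(j+1)) := by
  classical
  set K : ℕ := 2^10 * k with hKdef
  set M : ℕ := 2^17 * k^2 with hMdef
  set D : ℕ := B^3 with hDdef
  set P : ℕ := B^(3*t) with hPdef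
  have hK0 : 0 < K := by rw [hKdef]; positivity
  have hK2 : 2 ≤ K := by rw [hKdef]; nlinarith [hk]
  have hKM : K ≤ M := by rw [hKdef, hMdef]; nlinarith [hk]
  have hM2 : 2 ≤ M := by rw [hMdef]; nlinarith [hk]
  have hkM : k ≤ M := by rw [hMdef]; nlinarith [hk]
  have hMbig : 2^17 ≤ M := by rw [hMdef]; nlinarith [hk]
  have hB2 : 2 ≤ B := le_trans hM2 hB
  have hMB : M ≤ B := hB
  have hP : 0 < P := by rw [hPdef]; positivity
  have hD0 : 0 < D := by rw [hDdef]; positivity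
  have hDB : B ≤ D := by rw [hDdef]; exact Nat.le_self_pow (by norm_num) B
  have hPDeq : B^(3*(t+1)) = P * D := by
    rw [hPdef, hDdef, ← pow_add]
    congr 1
    all_goals omega
  have hDBB : 131072 * 131072 ≤ B * B := Nat.mul_le_mul (le_trans hMbig hB) (le_trans hMbig hB)
  have h400 : 400 * B ≤ D := by
    rw [hDdef]
    nlinarith [hDBB, hB2]
  have hM0 : 0 < M := by omega
  clear_value K M D P
  have hbase : ∀ i : Fin k, 2 ≤ b i := fun i => le_trans hB2 (hbB i)
  have key_facts : ∀ i : Fin k, ∀ j : ℕ, j < 3*T → (b i)^(j+1) ≤ B^(3*T) →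
      Nat.findGreatest (fun m => K * B^(3*m) ≤ (b i)^(j+1)) (T-1) = t →
      (K * P ≤ (b i)^(j+1) ∧ (b i)^(j+1) ≤ K * (P * D) ∧ (b i)^j * M ≤ (b i)^(j+1)) := by
    intro i j hjT hq3T htf
    have hcB : B ≤ b i := hbB i
    have hqc : b i ≤ (b i)^(j+1) := Nat.le_self_pow (by omega) _
    have hKq : K * B^(3*0) ≤ (b i)^(j+1) := by
      simp only [Nat.mul_zero, pow_zero, mul_one]
      calc K ≤ M := hKM
      _ ≤ B := hMB
      _ ≤ b i := hcB
      _ ≤ (b i)^(j+1) := hqc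
    have hlower : K * P ≤ (b i)^(j+1) := by
      have hspec := Nat.findGreatest_spec (P := fun m => K * B^(3*m) ≤ (b i)^(j+1))
        (Nat.zero_le (T-1)) hKq
      rw [htf] at hspec
      rwa [hPdef]
    have hupper : (b i)^(j+1) ≤ K * (P * D) := by
      by_cases hcase : t + 1 ≤ T - 1
      · have hgt : Nat.findGreatest (fun m => K * B^(3*m) ≤ (b i)^(j+1)) (T-1) < t + 1 := by
          rw [htf]; omega
        have hng := Nat.findGreatest_is_greatest hgt hcase
        push_neg at hng
        rw [hPDeq] at hng
        exact le_of_lt hng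
      · have h3T : 3*T = 3*(t+1) := by omega
        calc (b i)^(j+1) ≤ B^(3*T) := hq3T
        _ = B^(3*(t+1)) := by rw [h3T]
        _ = P * D := hPDeq
        _ ≤ K * (P * D) := Nat.le_mul_of_pos_left _ hK0
    have hwM : (b i)^j * M ≤ (b i)^(j+1) := by
      have hsplit : (b i)^(j+1) = (b i)^j * b i := by ring
      rw [hsplit]
      exact Nat.mul_le_mul_left _ (le_trans hMB hcB)
    exact ⟨hlower, hupper, hwM⟩
  set Jset : Fin k → Finset ℕ := fun i => (Finset.range (3*T)).filter
      (fun j => (b i)^(j+1) ≤ B^(3*T) ∧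
        Nat.findGreatest (fun m => K * B^(3*m) ≤ (b i)^(j+1)) (T-1) = t) with hJdef
  set badset : Fin k → ℕ → Finset ℕ := fun i j => (Finset.Ico 1 D).filter
      (fun u => (x + P + u * P) % ((b i)^(j+1)) < (b i)^j + P) with hbaddef
  set Bad : Finset ℕ := (Finset.Ico 1 D).filter
      (fun u => ∃ i : Fin k, ∃ j ∈ Jset i,
        (x + P + u * P) % ((b i)^(j+1)) < (b i)^j + P) with hBaddef
  have hbadcard : ∀ i : Fin k, ∀ j ∈ Jset i,
      (badset i j).card ≤ (2*D)/K + (2*D)/K + (2*(K*D))/M + 6 := by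
    intro i j hj
    simp only [hJdef, Finset.mem_filter, Finset.mem_range] at hj
    obtain ⟨hjT, hq3T, htf⟩ := hj
    obtain ⟨hlow, hup, hwM⟩ := key_facts i j hjT hq3T htf
    have hbi0 : 0 < b i := by have := hbase i; omega
    have hq0 : 0 < (b i)^(j+1) := pow_pos hbi0 _
    have hcount : (badset i j).card ≤
        (D * P / ((b i)^(j+1)) + 2) * (((b i)^j + P) / P + 2) := by
      have hsub : badset i j ⊆ (Finset.range D).filter
          (fun u => ((x + P) + u * P) % ((b i)^(j+1)) < (b i)^j + P) := by
        intro u hu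
        simp only [hbaddef, Finset.mem_filter, Finset.mem_Ico] at hu
        simp only [Finset.mem_filter, Finset.mem_range]
        exact ⟨hu.1.2, hu.2⟩
      calc (badset i j).card ≤ _ := Finset.card_le_card hsub
      _ ≤ _ := count_ap D P ((b i)^(j+1)) ((b i)^j + P) (x + P) hP hq0
    have A1 : D * P / ((b i)^(j+1)) ≤ D / K := by
      calc D * P / ((b i)^(j+1)) ≤ D * P / (K * P) := Nat.div_le_div_left hlow (by positivity)
      _ = D / K := Nat.mul_div_mul_right D K hP
    have A2 : ((b i)^j + P) / P = (b i)^j / P + 1 := Nat.add_div_right _ hP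
    have hwqM : (b i)^j ≤ (b i)^(j+1) / M := (Nat.le_div_iff_mul_le hM0).mpr hwM
    have A3 : (b i)^j / P ≤ (K * D) / M := by
      calc (b i)^j / P ≤ ((b i)^(j+1) / M) / P := Nat.div_le_div_right hwqM
      _ = (b i)^(j+1) / (M * P) := Nat.div_div_eq_div_mul _ M P
      _ ≤ (K * (P * D)) / (M * P) := Nat.div_le_div_right hup
      _ = ((K * D) * P) / (M * P) := by congr 1; ring
      _ = (K * D) / M := Nat.mul_div_mul_right (K*D) M hP
    have hKleq : K ≤ (b i)^(j+1) := le_trans (Nat.le_mul_of_pos_right K hP) hlow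
    have hqK1 : 1 ≤ (b i)^(j+1) / K := (Nat.le_div_iff_mul_le hK0).mpr (by rwa [one_mul])
    have hwqK : (b i)^j ≤ (b i)^(j+1) / K := le_trans hwqM (Nat.div_le_div_left hKM hK0)
    have hPqK : P ≤ (b i)^(j+1) / K :=
      (Nat.le_div_iff_mul_le hK0).mpr (by rw [mul_comm]; exact hlow)
    have A4 : (D * P / ((b i)^(j+1))) * (((b i)^j + P) / P) ≤ (2*D) / K := by
      calc (D * P / ((b i)^(j+1))) * (((b i)^j + P) / P)
          ≤ (D * P) * ((b i)^j + P) / (((b i)^(j+1)) * P) := Nat.div_mul_div_le _ _ _ _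
      _ = ((D * ((b i)^j + P)) * P) / (((b i)^(j+1)) * P) := by congr 1; ring
      _ = (D * ((b i)^j + P)) / ((b i)^(j+1)) := Nat.mul_div_mul_right _ _ hP
      _ ≤ (D * (2 * ((b i)^(j+1) / K))) / ((b i)^(j+1)) := by
          apply Nat.div_le_div_right
          apply Nat.mul_le_mul_left
          calc (b i)^j + P ≤ (b i)^(j+1)/K + (b i)^(j+1)/K := Nat.add_le_add hwqK hPqK
          _ = 2 * ((b i)^(j+1)/K) := by ring
      _ ≤ (D * (2 * ((b i)^(j+1) / K))) / (((b i)^(j+1) / K) * K) := by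
          apply Nat.div_le_div_left (Nat.div_mul_le_self _ K)
          have h0 : 0 < (b i)^(j+1) / K := hqK1
          positivity
      _ = ((2 * D) * ((b i)^(j+1) / K)) / (K * ((b i)^(j+1) / K)) := by
          rw [mul_comm ((b i)^(j+1) / K) K]
          congr 1
          ring
      _ = (2 * D) / K := Nat.mul_div_mul_right (2*D) K hqK1
    have h2a : 2 * (D * P / ((b i)^(j+1))) ≤ 2 * (D / K) := Nat.mul_le_mul_left 2 A1
    have h2e : 2 * (((b i)^j + P) / P) ≤ 2 * ((K * D) / M + 1) := by
      apply Nat.mul_le_mul_left 2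
      rw [A2]
      exact Nat.add_le_add_right A3 1
    have hx1 : 2 * (D / K) ≤ (2*D)/K := Nat.mul_div_le_mul_div_assoc 2 D K
    have hx2 : 2 * ((K*D) / M) ≤ (2*(K*D))/M := Nat.mul_div_le_mul_div_assoc 2 (K*D) M
    calc (badset i j).card
        ≤ (D * P / ((b i)^(j+1)) + 2) * (((b i)^j + P) / P + 2) := hcount
    _ = (D * P / ((b i)^(j+1))) * (((b i)^j + P) / P)
          + 2 * (D * P / ((b i)^(j+1))) + 2 * (((b i)^j + P) / P) + 4 := by ring
    _ ≤ (2*D)/K + 2 * (D / K) + 2 * ((K * D) / M + 1) + 4 :=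
        Nat.add_le_add (Nat.add_le_add (Nat.add_le_add A4 h2a) h2e) le_rfl
    _ = (2*D)/K + 2 * (D / K) + 2 * ((K * D) / M) + 6 := by ring
    _ ≤ (2*D)/K + (2*D)/K + (2*(K*D))/M + 6 :=
        Nat.add_le_add (Nat.add_le_add (Nat.add_le_add le_rfl hx1) hx2) le_rfl
  have hJcard : ∀ i : Fin k, (Jset i).card ≤ 4 := by
    intro i
    rcases (Jset i).eq_empty_or_nonempty with he | hne
    · simp [he]
    · have hmem₀ : (Jset i).min' hne ∈ Jset i := (Jset i).min'_mem hne
      have hmem₀' := hmem₀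
      simp only [hJdef, Finset.mem_filter, Finset.mem_range] at hmem₀'
      have hfacts₀ : K * P ≤ (b i)^((Jset i).min' hne + 1) :=
        (key_facts i _ hmem₀'.1 hmem₀'.2.1 hmem₀'.2.2).1
      have hsub : Jset i ⊆ Finset.Icc ((Jset i).min' hne) ((Jset i).min' hne + 3) := by
        intro j hj
        rw [Finset.mem_Icc]
        have hle : (Jset i).min' hne ≤ j := (Jset i).min'_le j hj
        refine ⟨hle, ?_⟩
        simp only [hJdef, Finset.mem_filter, Finset.mem_range] at hj
        have hupj : (b i)^(j+1) ≤ K * (P * D) := (key_facts i j hj.1 hj.2.1 hj.2.2).2.1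
        have hsplit : (b i)^(j+1) = (b i)^((Jset i).min' hne + 1) * (b i)^(j - (Jset i).min' hne) := by
          rw [← pow_add]
          congr 1
          omega
        have hBle : B^(j - (Jset i).min' hne) ≤ (b i)^(j - (Jset i).min' hne) :=
          Nat.pow_le_pow_left (hbB i) _
        have hchain : (b i)^((Jset i).min' hne + 1) * B^(j - (Jset i).min' hne)
            ≤ (b i)^((Jset i).min' hne + 1) * D := by
          calc (b i)^((Jset i).min' hne + 1) * B^(j - (Jset i).min' hne)
              ≤ (b i)^((Jset i).min' hne + 1) * (b i)^(j - (Jset i).min' hne) :=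
                Nat.mul_le_mul_left _ hBle
          _ = (b i)^(j+1) := hsplit.symm
          _ ≤ K * (P * D) := hupj
          _ = (K * P) * D := by ring
          _ ≤ (b i)^((Jset i).min' hne + 1) * D := Nat.mul_le_mul_right _ hfacts₀
        have hbi0 : 0 < b i := by have := hbase i; omega
        have hpow : B^(j - (Jset i).min' hne) ≤ D :=
          Nat.le_of_mul_le_mul_left hchain (pow_pos hbi0 _)
        rw [hDdef] at hpow
        have hjj : j - (Jset i).min' hne ≤ 3 :=
          (Nat.pow_le_pow_iff_right (by omega : 1 < B)).mp hpow
        omega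
      calc (Jset i).card ≤ _ := Finset.card_le_card hsub
      _ = 4 := by rw [Nat.card_Icc]; omega
  have hBadsub : Bad ⊆ Finset.univ.biUnion (fun i : Fin k =>
      (Jset i).biUnion (fun j => badset i j)) := by
    intro u hu
    simp only [hBaddef, Finset.mem_filter] at hu
    obtain ⟨huIco, i, j, hjJ, hbad⟩ := hu
    simp only [Finset.mem_biUnion]
    exact ⟨i, Finset.mem_univ i, j, hjJ, by
      simp only [hbaddef, Finset.mem_filter]
      exact ⟨huIco, hbad⟩⟩
  have hBadcard : Bad.card ≤ k * (4 * ((2*D)/K + (2*D)/K + (2*(K*D))/M + 6)) := by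
    calc Bad.card ≤ (Finset.univ.biUnion (fun i : Fin k =>
        (Jset i).biUnion (fun j => badset i j))).card := Finset.card_le_card hBadsub
    _ ≤ ∑ i : Fin k, ((Jset i).biUnion (fun j => badset i j)).card := Finset.card_biUnion_le
    _ ≤ ∑ _i : Fin k, (4 * ((2*D)/K + (2*D)/K + (2*(K*D))/M + 6)) := by
        apply Finset.sum_le_sum
        intro i _
        calc ((Jset i).biUnion (fun j => badset i j)).card
            ≤ ∑ j ∈ Jset i, (badset i j).card := Finset.card_biUnion_le
        _ ≤ ∑ _j ∈ Jset i, ((2*D)/K + (2*D)/K + (2*(K*D))/M + 6) :=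
            Finset.sum_le_sum (fun j hj => hbadcard i j hj)
        _ = (Jset i).card * ((2*D)/K + (2*D)/K + (2*(K*D))/M + 6) := by
            rw [Finset.sum_const, smul_eq_mul]
        _ ≤ 4 * ((2*D)/K + (2*D)/K + (2*(K*D))/M + 6) :=
            Nat.mul_le_mul_right _ (hJcard i)
    _ = k * (4 * ((2*D)/K + (2*D)/K + (2*(K*D))/M + 6)) := by
        rw [Finset.sum_const, Finset.card_univ, Fintype.card_fin, smul_eq_mul]
  have hnumeric : k * (4 * ((2*D)/K + (2*D)/K + (2*(K*D))/M + 6)) + 1 < D := by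
    have e1 : 4 * k * ((2*D)/K) ≤ D / 128 := by
      calc 4 * k * ((2*D)/K) ≤ (4 * k * (2*D)) / K := Nat.mul_div_le_mul_div_assoc _ _ _
      _ = ((8*D) * k) / (2^10 * k) := by rw [hKdef]; congr 1; ring
      _ = (8*D) / 2^10 := Nat.mul_div_mul_right (8*D) (2^10) (by omega)
      _ = D / 128 := by
          have h8 : (2:ℕ)^10 = 8 * 128 := by norm_num
          rw [h8]
          exact Nat.mul_div_mul_left D 128 (by norm_num)
    have e3 : 4 * k * ((2*(K*D))/M) ≤ D / 16 := by
      calc 4 * k * ((2*(K*D))/M) ≤ (4 * k * (2*(K*D))) / M := Nat.mul_div_le_mul_div_assoc _ _ _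
      _ = ((2^13 * D) * k^2) / (2^17 * k^2) := by rw [hKdef, hMdef]; congr 1; ring
      _ = (2^13 * D) / 2^17 := Nat.mul_div_mul_right _ (2^17) (by positivity)
      _ = D / 16 := by
          have h13 : (2:ℕ)^17 = 2^13 * 16 := by norm_num
          rw [h13]
          exact Nat.mul_div_mul_left D 16 (by positivity)
    have hkB : k ≤ B := le_trans hkM hB
    have h16 : (D/16) * 16 ≤ D := Nat.div_mul_le_self D 16
    have h128 : (D/128) * 128 ≤ D := Nat.div_mul_le_self D 128
    have hD2 : 2 ≤ D := le_trans hB2 hDB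
    have lhs_eq : k * (4 * ((2*D)/K + (2*D)/K + (2*(K*D))/M + 6)) =
        4 * k * ((2*D)/K) + 4 * k * ((2*D)/K) + 4 * k * ((2*(K*D))/M) + 24 * k := by ring
    rw [lhs_eq]
    have h24 : 24 * k ≤ 24 * B := by omega
    linarith [e1, e3, h16, h128, h400, h24, hD2]
  have hExists : ∃ u ∈ Finset.Ico 1 D, u ∉ Bad := by
    by_contra hcon
    push_neg at hcon
    have hsub : Finset.Ico 1 D ⊆ Bad := fun u hu => hcon u hu
    have hcc := Finset.card_le_card hsub
    rw [Nat.card_Ico] at hcc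
    have h1 := hBadcard
    omega
  obtain ⟨u, huIco, huBad⟩ := hExists
  rw [Finset.mem_Ico] at huIco
  refine ⟨u, huIco.1, huIco.2, ?_⟩
  intro i j hjT hq3T htf'
  have htf : Nat.findGreatest (fun m => K * B^(3*m) ≤ (b i)^(j+1)) (T-1) = t := htf'
  obtain ⟨hlow, hup, hwM⟩ := key_facts i j hjT hq3T htf
  have hbi0 : 0 < b i := by have := hbase i; omega
  have hq0 : 0 < (b i)^(j+1) := pow_pos hbi0 _
  have hw0 : 0 < (b i)^j := pow_pos hbi0 _
  have hjJ : j ∈ Jset i := by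
    simp only [hJdef, Finset.mem_filter, Finset.mem_range]
    exact ⟨hjT, hq3T, htf⟩
  have hnotbad : ¬ ((x + P + u * P) % ((b i)^(j+1)) < (b i)^j + P) := by
    intro hbad
    apply huBad
    simp only [hBaddef, Finset.mem_filter, Finset.mem_Ico]
    exact ⟨⟨huIco.1, huIco.2⟩, i, j, hjJ, hbad⟩
  have hPq : P < (b i)^(j+1) := by
    have h2P : 2 * P ≤ K * P := Nat.mul_le_mul_right P hK2
    have h3 := le_trans h2P hlow
    omega
  have hrq : (x + u * P) % ((b i)^(j+1)) < (b i)^(j+1) := Nat.mod_lt _ hq0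
  have hshift : (x + P + u * P) % ((b i)^(j+1))
      = ((x + u * P) % ((b i)^(j+1)) + P) % ((b i)^(j+1)) := by
    have e : x + P + u * P = (x + u*P) + P := by ring
    rw [e, Nat.add_mod]
    try rw [Nat.mod_eq_of_lt hPq]
  have comp2 : (x + u * P) % ((b i)^(j+1)) + P ≤ (b i)^(j+1) := by
    by_contra h2
    push_neg at h2
    have hsubq : ((x + u * P) % ((b i)^(j+1)) + P) % ((b i)^(j+1))
        = (x + u * P) % ((b i)^(j+1)) + P - (b i)^(j+1) := by
      rw [Nat.mod_eq_sub_mod (le_of_lt h2)]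
      exact Nat.mod_eq_of_lt (by omega)
    apply hnotbad
    rw [hshift, hsubq]
    omega
  have comp1 : (b i)^j ≤ (x + u * P) % ((b i)^(j+1)) := by
    by_contra h1
    push_neg at h1
    apply hnotbad
    rw [hshift]
    rcases lt_or_eq_of_le comp2 with hlt | heq
    · rw [Nat.mod_eq_of_lt hlt]; omega
    · rw [heq, Nat.mod_self]; omega
  exact ⟨comp1, comp2⟩

private lemma stage (k B T : ℕ) (b : Fin k → ℕ)
    (hk : 1 ≤ k) (hB : 2^17 * k^2 ≤ B) (hbB : ∀ i, B ≤ b i) (hT : 0 < T) :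
    ∀ s, s ≤ T → ∃ x : ℕ,
      (1 ≤ s → B^(3*(T-1)) ≤ x) ∧ x + B^(3*(T-s)) ≤ B^(3*T) ∧
      (∀ i : Fin k, ∀ j : ℕ, j < 3*T → (b i)^(j+1) ≤ B^(3*T) →
        T - s ≤ Nat.findGreatest (fun m => 2^10 * k * B^(3*m) ≤ (b i)^(j+1)) (T-1) →
        ((b i)^j ≤ x % (b i)^(j+1) ∧
         x % (b i)^(j+1) + B^(3*(T-s)) ≤ (b i)^(j+1))) := by
  intro s
  induction s with
  | zero =>
    intro _
    refine ⟨0, ?_, ?_, ?_⟩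
    · intro h; omega
    · simp
    · intro i j _ _ hge
      exfalso
      have hle := Nat.findGreatest_le (P := fun m => 2^10 * k * B^(3*m) ≤ (b i)^(j+1)) (T-1)
      omega
  | succ s IH =>
    intro hs1
    obtain ⟨x, hx1, hx2, hx3⟩ := IH (by omega)
    have ht : T - s - 1 < T := by omega
    obtain ⟨u, hu1, huD, hgood⟩ := window_choice k B T (T - s - 1) b hk hB hbB hT ht x
    have e2 : T - (s+1) = T - s - 1 := by omega
    have hBpow : B^3 * B^(3*(T - s - 1)) = B^(3*(T-s)) := by
      rw [← pow_add]
      congr 1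
      omega
    have hupow : u * B^(3*(T - s - 1)) + B^(3*(T - s - 1)) ≤ B^(3*(T-s)) := by
      have hu2 : u + 1 ≤ B^3 := huD
      calc u * B^(3*(T - s - 1)) + B^(3*(T - s - 1)) = (u+1) * B^(3*(T - s - 1)) := by ring
      _ ≤ B^3 * B^(3*(T - s - 1)) := Nat.mul_le_mul_right _ hu2
      _ = B^(3*(T-s)) := hBpow
    refine ⟨x + u * B^(3*(T - s - 1)), ?_, ?_, ?_⟩
    · intro _
      by_cases hs0 : 1 ≤ s
      · calc B^(3*(T-1)) ≤ x := hx1 hs0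
        _ ≤ x + u * B^(3*(T - s - 1)) := Nat.le_add_right _ _
      · have hseq : s = 0 := by omega
        have het : T - s - 1 = T - 1 := by omega
        calc B^(3*(T-1)) = B^(3*(T - s - 1)) := by rw [het]
        _ ≤ u * B^(3*(T - s - 1)) := Nat.le_mul_of_pos_left _ (by omega)
        _ ≤ x + u * B^(3*(T - s - 1)) := Nat.le_add_left _ _
    · rw [e2]
      calc x + u * B^(3*(T - s - 1)) + B^(3*(T - s - 1))
          = x + (u * B^(3*(T - s - 1)) + B^(3*(T - s - 1))) := by ring
      _ ≤ x + B^(3*(T-s)) := Nat.add_le_add_left hupow x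
      _ ≤ B^(3*T) := hx2
    · intro i j hjT hq3T hge
      rw [e2]
      by_cases hcase :
          Nat.findGreatest (fun m => 2^10 * k * B^(3*m) ≤ (b i)^(j+1)) (T-1) = T - s - 1
      · exact hgood i j hjT hq3T hcase
      · have hge' : T - s ≤
            Nat.findGreatest (fun m => 2^10 * k * B^(3*m) ≤ (b i)^(j+1)) (T-1) := by
          omega
        obtain ⟨hc1, hc2⟩ := hx3 i j hjT hq3T hge'
        have hbi0 : 0 < b i := by
          have h2B : 2 ≤ B := le_trans (by nlinarith [hk]) hB
          have := hbB i
          omega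
        have hq0 : 0 < (b i)^(j+1) := pow_pos hbi0 _
        have hp : 0 < B^(3*(T - s - 1)) := by
          have h2B : 2 ≤ B := le_trans (by nlinarith [hk]) hB
          positivity
        have hq' : B^(3*(T-s)) ≤ (b i)^(j+1) := le_trans (Nat.le_add_left _ _) hc2
        have h1 : u * B^(3*(T - s - 1)) + B^(3*(T - s - 1)) ≤ (b i)^(j+1) :=
          le_trans hupow hq'
        have hvlt : u * B^(3*(T - s - 1)) < (b i)^(j+1) :=
          lt_of_lt_of_le (Nat.lt_add_of_pos_right hp) h1
        have h2 : x % (b i)^(j+1) + u * B^(3*(T - s - 1)) + B^(3*(T - s - 1))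
            ≤ (b i)^(j+1) := by
          calc x % (b i)^(j+1) + u * B^(3*(T - s - 1)) + B^(3*(T - s - 1))
              = x % (b i)^(j+1) + (u * B^(3*(T - s - 1)) + B^(3*(T - s - 1))) := by ring
          _ ≤ x % (b i)^(j+1) + B^(3*(T-s)) := Nat.add_le_add_left hupow _
          _ ≤ (b i)^(j+1) := hc2
        have hlt2 : x % (b i)^(j+1) + u * B^(3*(T - s - 1)) < (b i)^(j+1) :=
          lt_of_lt_of_le (Nat.lt_add_of_pos_right hp) h2
        have hmod : (x + u * B^(3*(T - s - 1))) % (b i)^(j+1)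
            = x % (b i)^(j+1) + u * B^(3*(T - s - 1)) := by
          rw [Nat.add_mod, Nat.mod_eq_of_lt hvlt]
          exact Nat.mod_eq_of_lt hlt2
        rw [hmod]
        exact ⟨le_trans hc1 (Nat.le_add_right _ _), h2⟩

/-- For each `k ≥ 2` there is `M ≥ 1` such that for all multiplicatively independent
`b_1, …, b_k ≥ M`, there are infinitely many positive integers all of whose base-`b_i`
digits are nonzero, for every `i`. -/
theorem infinitely_many_no_zero_digits (k : ℕ) (hk : 2 ≤ k) :
    ∃ M : ℕ, 1 ≤ M ∧ ∀ b : Fin k → ℕ, (∀ i, 2 ≤ b i) → (∀ i, M ≤ b i) →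
      MultiplicativelyIndependent b →
      ∀ N : ℕ, ∃ n : ℕ, N < n ∧ ∀ i : Fin k, ∀ d ∈ Nat.digits (b i) n, d ≠ 0 := by
  refine ⟨2^17 * k^2, by nlinarith [hk], ?_⟩
  intro b hb2 hbM _hmi N
  obtain ⟨i₀, -, hmin⟩ := Finset.exists_min_image Finset.univ b
    ⟨⟨0, by omega⟩, Finset.mem_univ _⟩
  have hB : 2^17 * k^2 ≤ b i₀ := hbM i₀
  have hbB : ∀ i, b i₀ ≤ b i := fun i => hmin i (Finset.mem_univ i)
  have hB2 : 2 ≤ b i₀ := hb2 i₀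
  have hT : 0 < N + 1 := by omega
  obtain ⟨n, hn1, hn2, hn3⟩ := stage k (b i₀) (N+1) b (by omega) hB hbB hT (N+1) le_rfl
  have hnlow : (b i₀)^(3*(N+1-1)) ≤ n := hn1 (by omega)
  have hnN : N < n := by
    have h1 : N < 2^N := Nat.lt_two_pow_self
    have h2 : (2:ℕ)^N ≤ 2^(3*N) := Nat.pow_le_pow_right (by norm_num) (by omega)
    have h3 : (2:ℕ)^(3*N) ≤ (b i₀)^(3*N) := Nat.pow_le_pow_left hB2 _
    have h4 : N + 1 - 1 = N := by omega
    rw [h4] at hnlow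
    omega
  have hn0 : 0 < n := by omega
  have hnup : n < (b i₀)^(3*(N+1)) := by
    have h5 : N + 1 - (N+1) = 0 := by omega
    rw [h5] at hn2
    simp only [Nat.mul_zero, pow_zero] at hn2
    omega
  refine ⟨n, hnN, ?_⟩
  intro i
  apply digits_nonzero (b i) (hb2 i) n hn0
  intro j hj
  have hq3T : (b i)^(j+1) ≤ (b i₀)^(3*(N+1)) := le_trans hj (le_of_lt hnup)
  have hjT : j < 3*(N+1) := by
    have hBj : (b i₀)^(j+1) ≤ (b i)^(j+1) := Nat.pow_le_pow_left (hbB i) _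
    have h6 : (b i₀)^(j+1) ≤ (b i₀)^(3*(N+1)) := le_trans hBj hq3T
    have h7 := (Nat.pow_le_pow_iff_right (by omega : 1 < b i₀)).mp h6
    omega
  have h0 : N + 1 - (N+1) ≤ Nat.findGreatest
      (fun m => 2^10 * k * (b i₀)^(3*m) ≤ (b i)^(j+1)) (N+1-1) := by
    have h8 : N + 1 - (N+1) = 0 := by omega
    rw [h8]
    exact Nat.zero_le _
  have := (hn3 i j hjT hq3T h0).1
  have h9 : N + 1 - (N+1) = 0 := by omega
  exact this
end

section
/- Let b > 2 be an integer, let l be an integer with 1 ≤ l < b − 1, and let B = {0, 1, …, l}. Then the set A_b^B is a Cantor set whose thickness is C(A_b^B) = l/(b − 1 − l) and whose normalized thickness is S(A_b^B) = l/(b − 1). -/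
/-- The set of points of `[0,1]` admitting a base-`b` expansion
`x = Σ_{i=1}^∞ d_i b^{-i}` with every digit `d_i` in `B`. -/
noncomputable def digitSet (b : ℕ) (B : Set ℕ) : Set ℝ :=
  {x : ℝ | ∃ d : ℕ → ℕ, (∀ i, d i ∈ B) ∧ x = ∑' i : ℕ, (d i : ℝ) / (b : ℝ) ^ (i + 1)}

/-- `(a, b)` is a bounded gap of `A`: a bounded connected component of `ℝ \ A`
(for compact `A`, these are exactly the intervals `(a,b)` with endpoints in `A`
and interior disjoint from `A`). -/
def IsGap (A : Set ℝ) (a b : ℝ) : Prop :=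
  a < b ∧ a ∈ A ∧ b ∈ A ∧ Set.Ioo a b ∩ A = ∅

/-- The right endpoint of the closest component of `ℝ \ A` of length `≥ b - a`
lying to the left of the gap `(a, b)`; the unbounded component `(-∞, sInf A)` qualifies. -/
noncomputable def leftPt (A : Set ℝ) (a b : ℝ) : ℝ :=
  sSup {d : ℝ | d ≤ a ∧ (d = sInf A ∨ ∃ c, b - a ≤ d - c ∧ IsGap A c d)}

/-- The left endpoint of the closest component of `ℝ \ A` of length `≥ b - a`
lying to the right of the gap `(a, b)`; the unbounded component `(sSup A, ∞)` qualifies. -/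
noncomputable def rightPt (A : Set ℝ) (a b : ℝ) : ℝ :=
  sInf {e : ℝ | b ≤ e ∧ (e = sSup A ∨ ∃ f, b - a ≤ f - e ∧ IsGap A e f)}

/-- The thickness `C(A) = inf_I min(b_L, b_R) / |I|` over all bounded gaps `I` of `A`. -/
noncomputable def thickness (A : Set ℝ) : ℝ :=
  sInf {r : ℝ | ∃ a b : ℝ, IsGap A a b ∧
    r = min (a - leftPt A a b) (rightPt A a b - b) / (b - a)}

/-- The normalized thickness `S(A) = C(A) / (C(A) + 1)`. -/
noncomputable def normThickness (A : Set ℝ) : ℝ :=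
  thickness A / (thickness A + 1)

/-- The length of the largest bounded gap of `A`. -/
noncomputable def largestGap (A : Set ℝ) : ℝ :=
  sSup {g : ℝ | ∃ a b : ℝ, IsGap A a b ∧ g = b - a}

/-- A Cantor set: a nonempty compact, totally disconnected subset of `ℝ`
without isolated points. -/
def IsCantorSet (A : Set ℝ) : Prop :=
  A.Nonempty ∧ IsCompact A ∧ IsTotallyDisconnected A ∧ ∀ x ∈ A, AccPt x (Filter.principal A)

namespace ThickAux

noncomputable def val (b : ℕ) (d : ℕ → ℕ) : ℝ := ∑' i : ℕ, (d i : ℝ) / (b : ℝ) ^ (i + 1)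

noncomputable def pref (b : ℕ) (d : ℕ → ℕ) (k : ℕ) : ℝ :=
  ∑ i ∈ Finset.range k, (d i : ℝ) / (b : ℝ) ^ (i + 1)

def Good (l : ℕ) (d : ℕ → ℕ) : Prop := ∀ i, d i ≤ l

section
variable {b l : ℕ}

lemma hb1 (hb : 2 < b) : (1:ℝ) < (b:ℝ) := by
  have : (2:ℝ) < (b:ℝ) := by exact_mod_cast hb
  linarith

lemma hbpos (hb : 2 < b) : (0:ℝ) < (b:ℝ) := lt_trans one_pos (hb1 hb)

lemma summable_geom (hb : 2 < b) : Summable (fun i : ℕ => ((b:ℝ)⁻¹) ^ i) := by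
  apply summable_geometric_of_lt_one (by positivity)
  rw [inv_lt_one_iff₀]; right; exact hb1 hb

lemma tsum_geom_shift (hb : 2 < b) : ∑' i : ℕ, (1:ℝ) / (b:ℝ) ^ (i + 1) = 1 / ((b:ℝ) - 1) := by
  have hlt : ((b:ℝ))⁻¹ < 1 := by rw [inv_lt_one_iff₀]; right; exact hb1 hb
  have h0 : (0:ℝ) ≤ ((b:ℝ))⁻¹ := by positivity
  have hgeo := tsum_geometric_of_lt_one h0 hlt
  have h1 := hb1 hb
  have hne : (b:ℝ) ≠ 0 := by positivity
  calc ∑' i : ℕ, (1:ℝ) / (b:ℝ) ^ (i + 1)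
      = ∑' i : ℕ, ((b:ℝ))⁻¹ * ((b:ℝ)⁻¹) ^ i := by
        apply tsum_congr; intro i
        rw [pow_succ, inv_pow]
        field_simp
    _ = ((b:ℝ))⁻¹ * ∑' i : ℕ, ((b:ℝ)⁻¹) ^ i := tsum_mul_left
    _ = ((b:ℝ))⁻¹ * (1 - (b:ℝ)⁻¹)⁻¹ := by rw [hgeo]
    _ = 1 / ((b:ℝ) - 1) := by
        rw [eq_div_iff (by linarith)]
        have : (1 - (b:ℝ)⁻¹) = ((b:ℝ) - 1) / b := by field_simp
        rw [this]
        field_simp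
        exact div_self (sub_ne_zero.mpr (ne_of_gt h1))

lemma summable_val (hb : 2 < b) (d : ℕ → ℕ) (hd : Good l d) :
    Summable (fun i : ℕ => (d i : ℝ) / (b : ℝ) ^ (i + 1)) := by
  have hsum : Summable (fun i : ℕ => (l:ℝ) * ((b:ℝ)⁻¹)^(i+1)) :=
    ((summable_geom hb).mul_left _).comp_injective (add_left_injective 1)
  apply Summable.of_nonneg_of_le (fun i => by positivity) _ hsum
  intro i
  rw [div_eq_mul_inv, ← inv_pow]
  apply mul_le_mul_of_nonneg_right _ (by positivity)
  exact_mod_cast hd i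

lemma tsum_const_digit (hb : 2 < b) (m : ℕ) :
    ∑' i : ℕ, (m : ℝ) / (b:ℝ) ^ (i+1) = (m:ℝ) / ((b:ℝ) - 1) := by
  calc ∑' i : ℕ, (m : ℝ) / (b:ℝ) ^ (i+1) = ∑' i : ℕ, (m:ℝ) * (1 / (b:ℝ) ^ (i+1)) := by
        apply tsum_congr; intro i; ring
    _ = (m:ℝ) * ∑' i : ℕ, (1:ℝ) / (b:ℝ)^(i+1) := tsum_mul_left
    _ = (m:ℝ) / ((b:ℝ) - 1) := by rw [tsum_geom_shift hb]; ring

end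

noncomputable def cst (b l : ℕ) : ℝ := (l:ℝ) / ((b:ℝ) - 1)

section
variable {b l : ℕ}

lemma cst_pos (hb : 2 < b) (hl1 : 1 ≤ l) : 0 < cst b l := by
  have := hb1 (b := b) hb
  apply div_pos _ (by linarith)
  exact_mod_cast hl1

lemma cst_lt_one (hb : 2 < b) (hl2 : l < b - 1) : cst b l < 1 := by
  have h1 := hb1 (b := b) hb
  rw [cst, div_lt_one (by linarith)]
  have : (l:ℝ) < ((b-1 : ℕ) : ℝ) := by exact_mod_cast hl2
  rw [Nat.cast_sub (by omega)] at this
  simpa using this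

lemma cst_nonneg (hb : 2 < b) : 0 ≤ cst b l := by
  have := hb1 (b := b) hb
  exact div_nonneg (Nat.cast_nonneg l) (by linarith)

lemma tsum_tail_const (hb : 2 < b) (m k : ℕ) :
    ∑' i : ℕ, (m : ℝ) / (b:ℝ) ^ (i + k + 1) = (m:ℝ) / ((b:ℝ) - 1) / (b:ℝ)^k := by
  have hpos := hbpos (b := b) hb
  calc ∑' i : ℕ, (m : ℝ) / (b:ℝ) ^ (i + k + 1)
      = ∑' i : ℕ, ((m:ℝ) / (b:ℝ) ^ (i + 1)) * ((b:ℝ)^k)⁻¹ := by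
        apply tsum_congr; intro i
        rw [show i + k + 1 = (i+1) + k by ring, pow_add]
        field_simp
    _ = (∑' i : ℕ, (m:ℝ) / (b:ℝ) ^ (i + 1)) * ((b:ℝ)^k)⁻¹ := tsum_mul_right
    _ = (m:ℝ) / ((b:ℝ) - 1) / (b:ℝ)^k := by rw [tsum_const_digit hb]; field_simp

lemma val_eq_pref_add_tail (hb : 2 < b) (d : ℕ → ℕ) (hd : Good l d) (k : ℕ) :
    val b d = pref b d k + ∑' i : ℕ, (d (i + k) : ℝ) / (b:ℝ) ^ (i + k + 1) := by
  rw [val, pref, ← Summable.sum_add_tsum_nat_add k (summable_val hb d hd)]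

lemma pref_le_val (hb : 2 < b) (d : ℕ → ℕ) (hd : Good l d) (k : ℕ) :
    pref b d k ≤ val b d := by
  rw [val_eq_pref_add_tail hb d hd k]
  have : 0 ≤ ∑' i : ℕ, (d (i + k) : ℝ) / (b:ℝ) ^ (i + k + 1) :=
    tsum_nonneg (fun i => by positivity)
  linarith

lemma val_nonneg (hb : 2 < b) (d : ℕ → ℕ) (hd : Good l d) : 0 ≤ val b d := by
  have := pref_le_val hb d hd 0
  simpa [pref] using this

lemma val_le_pref_add (hb : 2 < b) (d : ℕ → ℕ) (hd : Good l d) (k : ℕ) :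
    val b d ≤ pref b d k + cst b l / (b:ℝ)^k := by
  rw [val_eq_pref_add_tail hb d hd k]
  have key : ∑' i : ℕ, (d (i + k) : ℝ) / (b:ℝ) ^ (i + k + 1)
      ≤ ∑' i : ℕ, (l : ℝ) / (b:ℝ) ^ (i + k + 1) := by
    apply Summable.tsum_le_tsum
    · intro i
      have hp : (0:ℝ) < (b:ℝ)^(i+k+1) := pow_pos (hbpos hb) _
      exact div_le_div_of_nonneg_right (show ((d (i+k):ℕ):ℝ) ≤ (l:ℝ) by
        exact_mod_cast hd (i+k)) hp.le
    · exact (summable_val hb d hd).comp_injective (add_left_injective k)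
    · exact (summable_val hb (fun _ => l) (fun _ => le_rfl)).comp_injective
        (add_left_injective k)
  rw [tsum_tail_const hb l k] at key
  rw [cst]
  linarith

lemma pref_congr {u v : ℕ → ℕ} (k : ℕ) (h : ∀ i < k, u i = v i) :
    pref b u k = pref b v k := by
  apply Finset.sum_congr rfl
  intro i hi
  rw [h i (Finset.mem_range.mp hi)]

/-- The key separation lemma. -/
lemma sep (hb : 2 < b) {u v : ℕ → ℕ} (hu : Good l u) (_hv : Good l v) {j : ℕ}
    (hagree : ∀ i < j, u i = v i) (hlt : u j < v j) :
    (1 - cst b l) / (b:ℝ)^(j+1) ≤ val b v - val b u := by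
  have hp : (0:ℝ) < (b:ℝ)^(j+1) := pow_pos (hbpos hb) _
  have h1 : val b u ≤ pref b u (j+1) + cst b l / (b:ℝ)^(j+1) := val_le_pref_add hb u hu _
  have h2 : pref b v (j+1) ≤ val b v := pref_le_val hb v _hv _
  have h3 : pref b u (j+1) = pref b u j + (u j : ℝ) / (b:ℝ)^(j+1) := by
    rw [pref, Finset.sum_range_succ, ← pref]
  have h4 : pref b v (j+1) = pref b u j + (v j : ℝ) / (b:ℝ)^(j+1) := by
    rw [pref, Finset.sum_range_succ, ← pref, pref_congr j hagree]
  have h5 : ((u j : ℝ) + 1) ≤ (v j : ℝ) := by exact_mod_cast hlt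
  have h6 : ((u j : ℝ) + 1) / (b:ℝ)^(j+1) ≤ (v j : ℝ) / (b:ℝ)^(j+1) := by gcongr
  have e1 : (1 - cst b l) / (b:ℝ)^(j+1)
      = (((u j : ℝ) + 1) / (b:ℝ)^(j+1) - (u j : ℝ) / (b:ℝ)^(j+1)) - cst b l / (b:ℝ)^(j+1) := by
    field_simp
    ring
  linarith

lemma val_lt_of_sep (hb : 2 < b) (hl2 : l < b - 1) {u v : ℕ → ℕ} (hu : Good l u)
    (hv : Good l v) {j : ℕ} (hagree : ∀ i < j, u i = v i) (hlt : u j < v j) :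
    val b u < val b v := by
  have := sep hb hu hv hagree hlt
  have hc := cst_lt_one hb hl2
  have hp : (0:ℝ) < (b:ℝ)^(j+1) := pow_pos (hbpos hb) _
  have : 0 < (1 - cst b l) / (b:ℝ)^(j+1) := div_pos (by linarith) hp
  linarith [sep hb hu hv hagree hlt]

/-- Extension by zeros. -/
def zext (d : ℕ → ℕ) (k : ℕ) : ℕ → ℕ := fun i => if i < k then d i else 0

/-- Extension by the maximal digit. -/
def lext (l : ℕ) (d : ℕ → ℕ) (k : ℕ) : ℕ → ℕ := fun i => if i < k then d i else l

lemma good_zext {d : ℕ → ℕ} (hd : Good l d) (k : ℕ) : Good l (zext d k) := by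
  intro i; rw [zext]; split
  · exact hd i
  · exact Nat.zero_le l

lemma good_lext {d : ℕ → ℕ} (hd : Good l d) (k : ℕ) : Good l (lext l d k) := by
  intro i; rw [lext]; split
  · exact hd i
  · exact le_rfl

lemma val_zext (hb : 2 < b) {d : ℕ → ℕ} (hd : Good l d) (k : ℕ) :
    val b (zext d k) = pref b d k := by
  rw [val_eq_pref_add_tail hb _ (good_zext hd k) k]
  have h1 : pref b (zext d k) k = pref b d k :=
    pref_congr k (fun i hi => by simp [zext, hi])
  have h2 : ∑' i : ℕ, ((zext d k (i + k) : ℕ) : ℝ) / (b:ℝ) ^ (i + k + 1) = 0 := by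
    have hz : ∀ i : ℕ, ((zext d k (i + k) : ℕ) : ℝ) / (b:ℝ) ^ (i + k + 1) = 0 := by
      intro i; simp [zext]
    simp only [hz]
    exact tsum_zero
  rw [h1, h2, add_zero]

lemma val_lext (hb : 2 < b) {d : ℕ → ℕ} (hd : Good l d) (k : ℕ) :
    val b (lext l d k) = pref b d k + cst b l / (b:ℝ)^k := by
  rw [val_eq_pref_add_tail hb _ (good_lext hd k) k]
  have h1 : pref b (lext l d k) k = pref b d k :=
    pref_congr k (fun i hi => by simp [lext, hi])
  have h2 : ∑' i : ℕ, ((lext l d k (i + k) : ℕ) : ℝ) / (b:ℝ) ^ (i + k + 1)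
      = (l:ℝ) / ((b:ℝ) - 1) / (b:ℝ)^k := by
    rw [← tsum_tail_const hb l k]
    apply tsum_congr; intro i
    simp [lext]
  rw [h1, h2, cst]

lemma pref_rat (hb : 2 < b) (d : ℕ → ℕ) (k : ℕ) : ∃ N : ℕ, pref b d k = (N : ℝ) / (b:ℝ)^k := by
  induction k with
  | zero => exact ⟨0, by simp [pref]⟩
  | succ k ih =>
    obtain ⟨N, hN⟩ := ih
    refine ⟨N * b + d k, ?_⟩
    rw [pref, Finset.sum_range_succ, ← pref, hN]
    have hne : (b:ℝ) ≠ 0 := ne_of_gt (hbpos hb)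
    push_cast
    rw [pow_succ]
    field_simp

lemma pref_spacing (hb : 2 < b) (u v : ℕ → ℕ) (k : ℕ)
    (h : pref b u k ≠ pref b v k) :
    1 / (b:ℝ)^k ≤ |pref b u k - pref b v k| := by
  obtain ⟨N, hN⟩ := pref_rat hb u k
  obtain ⟨M, hM⟩ := pref_rat hb v k
  have hp : (0:ℝ) < (b:ℝ)^k := pow_pos (hbpos hb) _
  have hNM : N ≠ M := by
    intro hEq; apply h; rw [hN, hM, hEq]
  have h1 : (1:ℝ) ≤ |(N:ℝ) - (M:ℝ)| := by
    have : ((N:ℤ) - (M:ℤ)) ≠ 0 := sub_ne_zero.mpr (by exact_mod_cast hNM)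
    have := Int.one_le_abs this
    have h2 : (1:ℝ) ≤ |(((N:ℤ) - (M:ℤ) : ℤ) : ℝ)| := by
      rw [← Int.cast_abs]
      exact_mod_cast this
    push_cast at h2
    exact h2
  rw [hN, hM, div_sub_div_same, abs_div, abs_of_pos hp, div_le_div_iff₀ hp hp]
  calc (1:ℝ) * (b:ℝ)^k = (b:ℝ)^k := by ring
    _ ≤ |(N:ℝ) - (M:ℝ)| * (b:ℝ)^k := by nlinarith
  
end
section
variable {b l : ℕ}

lemma mem_digitSet_iff {x : ℝ} :
    x ∈ digitSet b {n : ℕ | n ≤ l} ↔ ∃ d : ℕ → ℕ, Good l d ∧ x = val b d := Iff.rfl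

lemma val_mem (d : ℕ → ℕ) (hd : Good l d) : val b d ∈ digitSet b {n : ℕ | n ≤ l} :=
  ⟨d, hd, rfl⟩

lemma zero_mem (hb : 2 < b) : (0:ℝ) ∈ digitSet b {n : ℕ | n ≤ l} := by
  have h0 : Good l (fun _ => 0) := fun _ => Nat.zero_le l
  have := val_zext (l := l) hb (d := fun _ => 0) h0 0
  have h2 : zext (fun _ => 0) 0 = (fun _ => 0) := by funext i; simp [zext]
  rw [h2] at this
  simp only [pref, Finset.range_zero, Finset.sum_empty] at this
  rw [show (0:ℝ) = val b (fun _ => 0) from this.symm]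
  exact val_mem _ h0

lemma cst_mem (hb : 2 < b) : cst b l ∈ digitSet b {n : ℕ | n ≤ l} := by
  have hg : Good l (fun _ => l) := fun _ => le_rfl
  have : val b (fun _ => l) = cst b l := by rw [val, tsum_const_digit hb l, cst]
  rw [← this]
  exact val_mem _ hg

lemma mem_bounds (hb : 2 < b) {x : ℝ} (hx : x ∈ digitSet b {n : ℕ | n ≤ l}) :
    0 ≤ x ∧ x ≤ cst b l := by
  obtain ⟨d, hd, rfl⟩ := hx
  constructor
  · exact val_nonneg hb d hd
  · have := val_le_pref_add hb d hd 0
    simpa [pref, val] using this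

lemma isLeast_A (hb : 2 < b) : IsLeast (digitSet b {n : ℕ | n ≤ l}) 0 :=
  ⟨zero_mem hb, fun x hx => (mem_bounds hb hx).1⟩

lemma isGreatest_A (hb : 2 < b) : IsGreatest (digitSet b {n : ℕ | n ≤ l}) (cst b l) :=
  ⟨cst_mem hb, fun x hx => (mem_bounds hb hx).2⟩

lemma sInf_A (hb : 2 < b) : sInf (digitSet b {n : ℕ | n ≤ l}) = 0 :=
  (isLeast_A hb).csInf_eq

lemma sSup_A (hb : 2 < b) : sSup (digitSet b {n : ℕ | n ≤ l}) = cst b l :=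
  (isGreatest_A hb).csSup_eq

/-- first index of difference -/
lemma exists_min_diff {u v : ℕ → ℕ} (h : u ≠ v) :
    ∃ j, u j ≠ v j ∧ ∀ i < j, u i = v i := by
  have hex : ∃ j, u j ≠ v j := Function.ne_iff.mp h
  refine ⟨Nat.find hex, Nat.find_spec hex, fun i hi => ?_⟩
  by_contra hne
  exact (Nat.find_le hne).not_gt hi

lemma lext_of_lt {d : ℕ → ℕ} {k i : ℕ} (h : i < k) : lext l d k i = d i := if_pos h
lemma lext_of_ge {d : ℕ → ℕ} {k i : ℕ} (h : k ≤ i) : lext l d k i = l :=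
  if_neg (not_lt.mpr h)
lemma zext_of_lt {d : ℕ → ℕ} {k i : ℕ} (h : i < k) : zext d k i = d i := if_pos h
lemma zext_of_ge {d : ℕ → ℕ} {k i : ℕ} (h : k ≤ i) : zext d k i = 0 :=
  if_neg (not_lt.mpr h)

/-- tail all-l identification -/
lemma eq_lext_of_tail {u : ℕ → ℕ} {j : ℕ} (h : ∀ i, j < i → u i = l) :
    u = lext l u (j+1) := by
  funext i
  rcases lt_or_ge i (j+1) with hi | hi
  · rw [lext_of_lt hi]
  · rw [lext_of_ge hi, h i (by omega)]

lemma eq_zext_of_tail {u : ℕ → ℕ} {j : ℕ} (h : ∀ i, j < i → u i = 0) :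
    u = zext u (j+1) := by
  funext i
  rcases lt_or_ge i (j+1) with hi | hi
  · rw [zext_of_lt hi]
  · rw [zext_of_ge hi, h i (by omega)]

lemma pref_succ (d : ℕ → ℕ) (m : ℕ) :
    pref b d (m+1) = pref b d m + (d m : ℝ) / (b:ℝ)^(m+1) := by
  rw [pref, Finset.sum_range_succ, ← pref]

/-- The digit sequence of the right endpoint of a gap. -/
def gapv (d : ℕ → ℕ) (m : ℕ) : ℕ → ℕ :=
  fun i => if i < m then d i else if i = m then d m + 1 else 0

lemma good_gapv {d : ℕ → ℕ} (hd : Good l d) {m : ℕ} (hdm : d m < l) :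
    Good l (gapv d m) := by
  intro i
  simp only [gapv]
  split
  · exact hd i
  · split
    · omega
    · exact Nat.zero_le l

lemma val_gapv (hb : 2 < b) {d : ℕ → ℕ} (hd : Good l d) {m : ℕ} (hdm : d m < l) :
    val b (gapv d m) = pref b d m + ((d m : ℝ) + 1) / (b:ℝ)^(m+1) := by
  have hg := good_gapv hd hdm
  have hz : gapv d m = zext (gapv d m) (m+1) := by
    apply eq_zext_of_tail
    intro i hi
    simp only [gapv]
    rw [if_neg (by omega), if_neg (by omega)]
  conv_lhs => rw [hz]
  rw [val_zext hb hg, pref_succ]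
  have h1 : pref b (gapv d m) m = pref b d m :=
    pref_congr m (fun i hi => by simp only [gapv]; rw [if_pos hi])
  have h2 : gapv d m m = d m + 1 := by
    simp [gapv]
  rw [h1, h2]
  push_cast; ring

lemma val_lext' (hb : 2 < b) {d : ℕ → ℕ} (hd : Good l d) (m : ℕ) :
    val b (lext l d (m+1)) = pref b d (m+1) + cst b l / (b:ℝ)^(m+1) :=
  val_lext hb hd (m+1)

/-- Backward direction: the standard intervals are gaps. -/
lemma isGap_of_spec (hb : 2 < b) (hl2 : l < b - 1) (d : ℕ → ℕ) (m : ℕ)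
    (hd : Good l d) (hdm : d m < l) :
    IsGap (digitSet b {n : ℕ | n ≤ l})
      (pref b d (m+1) + cst b l / (b:ℝ)^(m+1))
      (pref b d m + ((d m : ℝ)+1) / (b:ℝ)^(m+1)) := by
  have hp : (0:ℝ) < (b:ℝ)^(m+1) := pow_pos (hbpos hb) _
  have hc1 : cst b l < 1 := cst_lt_one hb hl2
  have hc0 : 0 ≤ cst b l := cst_nonneg hb
  have hlen : (pref b d m + ((d m : ℝ)+1) / (b:ℝ)^(m+1))
      - (pref b d (m+1) + cst b l / (b:ℝ)^(m+1)) = (1 - cst b l) / (b:ℝ)^(m+1) := by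
    rw [pref_succ]; field_simp; ring
  have hposlen : 0 < (1 - cst b l) / (b:ℝ)^(m+1) := div_pos (by linarith) hp
  have hac : (pref b d (m+1) + cst b l / (b:ℝ)^(m+1))
      < (pref b d m + ((d m : ℝ)+1) / (b:ℝ)^(m+1)) := by linarith
  have hgu : Good l (lext l d (m+1)) := good_lext hd _
  have hau : pref b d (m+1) + cst b l / (b:ℝ)^(m+1) = val b (lext l d (m+1)) :=
    (val_lext' hb hd m).symm
  have hgv : Good l (gapv d m) := good_gapv hd hdm
  have hcv : pref b d m + ((d m : ℝ)+1) / (b:ℝ)^(m+1) = val b (gapv d m) :=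
    (val_gapv hb hd hdm).symm
  refine ⟨hac, hau ▸ val_mem _ hgu, hcv ▸ val_mem _ hgv, ?_⟩
  rw [Set.eq_empty_iff_forall_notMem]
  rintro x ⟨⟨hax, hxc⟩, w, hgw', rfl⟩
  have hgw : Good l w := hgw'
  have hax' : val b (lext l d (m+1)) < val b w := by rw [← hau]; exact hax
  have hxc' : val b w < val b (gapv d m) := by rw [← hcv]; exact hxc
  have hwu : w ≠ lext l d (m+1) := by
    intro hEq
    rw [hEq] at hax'
    exact lt_irrefl _ hax'
  obtain ⟨j, hj, hagree⟩ := exists_min_diff hwu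
  rcases lt_or_gt_of_ne hj with hlt | hgt
  · have := sep hb hgw hgu hagree hlt
    have hpj : 0 < (1 - cst b l)/(b:ℝ)^(j+1) := div_pos (by linarith) (pow_pos (hbpos hb) _)
    linarith
  · have hjm : j ≤ m := by
      by_contra hjgt
      have h1 : lext l d (m+1) j = l := lext_of_ge (by omega)
      have := hgw j
      omega
    have hsep := sep hb hgu hgw (fun i hi => (hagree i hi).symm) hgt
    have hpow : (b:ℝ)^(j+1) ≤ (b:ℝ)^(m+1) :=
      pow_le_pow_right₀ (le_of_lt (hb1 hb)) (by omega)
    have hmono : (1 - cst b l) / (b:ℝ)^(m+1) ≤ (1 - cst b l) / (b:ℝ)^(j+1) :=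
      div_le_div_of_nonneg_left (by linarith) (pow_pos (hbpos hb) _) hpow
    linarith

/-- Forward direction: every gap has the standard form. -/
lemma spec_of_isGap (hb : 2 < b) (hl2 : l < b - 1) {a c : ℝ}
    (hg : IsGap (digitSet b {n : ℕ | n ≤ l}) a c) :
    ∃ (d : ℕ → ℕ) (m : ℕ), Good l d ∧ d m < l ∧
      a = pref b d (m+1) + cst b l / (b:ℝ)^(m+1) ∧
      c = pref b d m + ((d m : ℝ)+1) / (b:ℝ)^(m+1) := by
  obtain ⟨hac, ⟨u, hgu', hau⟩, ⟨v, hgv', hcv⟩, hempty⟩ := hg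
  have hgu : Good l u := hgu'
  have hgv : Good l v := hgv'
  have hau' : a = val b u := hau
  have hcv' : c = val b v := hcv
  subst hau' hcv'
  have hc1 : cst b l < 1 := cst_lt_one hb hl2
  have hnotmem : ∀ y, val b u < y → y < val b v → y ∉ digitSet b {n : ℕ | n ≤ l} := by
    intro y h1 h2 hmem
    rw [Set.eq_empty_iff_forall_notMem] at hempty
    exact hempty y ⟨⟨h1, h2⟩, hmem⟩
  have huv : u ≠ v := by rintro rfl; exact lt_irrefl _ hac
  obtain ⟨j, hj, hagree⟩ := exists_min_diff huv
  have hujvj : u j < v j := by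
    rcases lt_or_gt_of_ne hj with h | h
    · exact h
    · exfalso
      have := sep hb hgv hgu (fun i hi => (hagree i hi).symm) h
      have hpj : 0 < (1 - cst b l)/(b:ℝ)^(j+1) := div_pos (by linarith) (pow_pos (hbpos hb) _)
      linarith
  have hppos : ∀ k : ℕ, (0:ℝ) < (1 - cst b l) / (b:ℝ)^(k+1) :=
    fun k => div_pos (by linarith) (pow_pos (hbpos hb) _)
  -- Claim A : tail of u is all l
  have tailu : ∀ i, j < i → u i = l := by
    intro i hi
    by_contra hne
    have hlt : u i < l := lt_of_le_of_ne (hgu i) hne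
    have hgu2 : Good l (Function.update u i (u i + 1)) := by
      intro n
      rcases eq_or_ne n i with rfl | hni
      · rw [Function.update_self]; omega
      · rw [Function.update_of_ne hni]; exact hgu n
    have h1 : (1 - cst b l) / (b:ℝ)^(i+1) ≤ val b (Function.update u i (u i + 1)) - val b u := by
      apply sep hb hgu hgu2
      · intro n hn; rw [Function.update_of_ne (by omega)]
      · rw [Function.update_self]; omega
    have h2 : (1 - cst b l) / (b:ℝ)^(j+1) ≤ val b v - val b (Function.update u i (u i + 1)) := by
      apply sep hb hgu2 hgv
      · intro n hn
        rw [Function.update_of_ne (by omega)]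
        exact hagree n hn
      · rw [Function.update_of_ne (by omega)]; exact hujvj
    exact hnotmem (val b (Function.update u i (u i + 1)))
      (by linarith [hppos i]) (by linarith [hppos j]) (val_mem _ hgu2)
  -- Claim B : v j = u j + 1
  have hvj : v j = u j + 1 := by
    by_contra hne
    have hvj2 : u j + 1 < v j := by omega
    have hgv2 : Good l (Function.update v j (u j + 1)) := by
      intro n
      rcases eq_or_ne n j with rfl | hnj
      · rw [Function.update_self]; exact le_trans (by omega) (hgv n)
      · rw [Function.update_of_ne hnj]; exact hgv n
    have h1 : (1 - cst b l) / (b:ℝ)^(j+1) ≤ val b (Function.update v j (u j + 1)) - val b u := by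
      apply sep hb hgu hgv2
      · intro n hn; rw [Function.update_of_ne (by omega)]; exact hagree n hn
      · rw [Function.update_self]; omega
    have h2 : (1 - cst b l) / (b:ℝ)^(j+1) ≤ val b v - val b (Function.update v j (u j + 1)) := by
      apply sep hb hgv2 hgv
      · intro n hn; rw [Function.update_of_ne (by omega)]
      · rw [Function.update_self]; omega
    exact hnotmem (val b (Function.update v j (u j + 1)))
      (by linarith [hppos j]) (by linarith [hppos j]) (val_mem _ hgv2)
  -- Claim C : tail of v is zero
  have tailv : ∀ i, j < i → v i = 0 := by
    intro i hi
    by_contra hne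
    have hlt : 0 < v i := Nat.pos_of_ne_zero hne
    have hgv2 : Good l (Function.update v i 0) := by
      intro n
      rcases eq_or_ne n i with rfl | hni
      · rw [Function.update_self]; exact Nat.zero_le l
      · rw [Function.update_of_ne hni]; exact hgv n
    have h1 : (1 - cst b l) / (b:ℝ)^(j+1) ≤ val b (Function.update v i 0) - val b u := by
      apply sep hb hgu hgv2
      · intro n hn; rw [Function.update_of_ne (by omega)]; exact hagree n hn
      · rw [Function.update_of_ne (by omega)]; exact hujvj
    have h2 : (1 - cst b l) / (b:ℝ)^(i+1) ≤ val b v - val b (Function.update v i 0) := by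
      apply sep hb hgv2 hgv
      · intro n hn; rw [Function.update_of_ne (by omega)]
      · rw [Function.update_self]; omega
    exact hnotmem (val b (Function.update v i 0))
      (by linarith [hppos j]) (by linarith [hppos i]) (val_mem _ hgv2)
  have hujl : u j < l := by
    have := hgv j
    omega
  refine ⟨u, j, hgu, hujl, ?_, ?_⟩
  · conv_lhs => rw [eq_lext_of_tail tailu]
    rw [val_lext' hb hgu]
  · conv_lhs => rw [eq_zext_of_tail tailv]
    rw [val_zext hb hgv, pref_succ, ← pref_congr (b := b) j hagree, hvj]
    push_cast; ring

lemma gap_len (hb : 2 < b) (d : ℕ → ℕ) (m : ℕ) :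
    (pref b d m + ((d m : ℝ)+1) / (b:ℝ)^(m+1))
      - (pref b d (m+1) + cst b l / (b:ℝ)^(m+1)) = (1 - cst b l) / (b:ℝ)^(m+1) := by
  have hp : (0:ℝ) < (b:ℝ)^(m+1) := pow_pos (hbpos hb) _
  rw [pref_succ]
  field_simp
  ring

end

section
variable {b l : ℕ}

lemma pref_nonneg (hb : 2 < b) (d : ℕ → ℕ) (k : ℕ) : 0 ≤ pref b d k := by
  apply Finset.sum_nonneg
  intro i _
  have := hbpos (b := b) hb
  positivity

lemma pref_ext {d : ℕ → ℕ} {j k : ℕ} (hjk : j ≤ k) (h : ∀ i, j ≤ i → i < k → d i = 0) :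
    pref b d k = pref b d j := by
  induction k, hjk using Nat.le_induction with
  | base => rfl
  | succ k hjk ih =>
    rw [pref_succ, h k hjk (by omega), ih (fun i h1 h2 => h i h1 (by omega))]
    simp

lemma pow_le_pow_level (hb : 2 < b) {j m : ℕ} (hjm : j ≤ m) :
    (b:ℝ)^(j+1) ≤ (b:ℝ)^(m+1) :=
  pow_le_pow_right₀ (le_of_lt (hb1 hb)) (by omega)

lemma gapratio_nonincr (hb : 2 < b) (hl2 : l < b - 1) {j m : ℕ} (hjm : j ≤ m) :
    (1 - cst b l) / (b:ℝ)^(m+1) ≤ (1 - cst b l) / (b:ℝ)^(j+1) :=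
  div_le_div_of_nonneg_left (by linarith [cst_lt_one hb hl2]) (pow_pos (hbpos hb) _)
    (pow_le_pow_level hb hjm)

lemma level_le_of_len_le (hb : 2 < b) (hl2 : l < b - 1) {j m : ℕ}
    (h : (1 - cst b l) / (b:ℝ)^(m+1) ≤ (1 - cst b l) / (b:ℝ)^(j+1)) : j ≤ m := by
  have hc1 : cst b l < 1 := cst_lt_one hb hl2
  have hp1 : (0:ℝ) < (b:ℝ)^(j+1) := pow_pos (hbpos hb) _
  have hp2 : (0:ℝ) < (b:ℝ)^(m+1) := pow_pos (hbpos hb) _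
  have hpow : (b:ℝ)^(j+1) ≤ (b:ℝ)^(m+1) := by
    rw [div_le_div_iff₀ hp2 hp1] at h
    nlinarith
  have := (pow_le_pow_iff_right₀ (hb1 hb)).mp hpow
  omega

/-- `leftPt` of the standard gap. -/
lemma leftPt_gap (hb : 2 < b) (hl1 : 1 ≤ l) (hl2 : l < b - 1) (d : ℕ → ℕ) (m : ℕ)
    (hd : Good l d) (hdm : d m < l) :
    leftPt (digitSet b {n : ℕ | n ≤ l})
      (pref b d (m+1) + cst b l / (b:ℝ)^(m+1))
      (pref b d m + ((d m : ℝ)+1) / (b:ℝ)^(m+1)) = pref b d (m+1) := by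
  have hp : (0:ℝ) < (b:ℝ)^(m+1) := pow_pos (hbpos hb) _
  have hc1 : cst b l < 1 := cst_lt_one hb hl2
  have hc0 : 0 < cst b l := cst_pos hb hl1
  set a := pref b d (m+1) + cst b l / (b:ℝ)^(m+1) with ha
  set c := pref b d m + ((d m : ℝ)+1) / (b:ℝ)^(m+1) with hc
  clear_value a c
  have hca : c - a = (1 - cst b l) / (b:ℝ)^(m+1) := by rw [ha, hc]; exact gap_len hb d m
  have ha0a : pref b d (m+1) ≤ a := by
    rw [ha]
    have : 0 ≤ cst b l / (b:ℝ)^(m+1) := by positivity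
    linarith
  rw [leftPt]
  apply IsGreatest.csSup_eq
  constructor
  · -- membership
    refine ⟨ha0a, ?_⟩
    by_cases hz : ∀ i, i ≤ m → d i = 0
    · left
      rw [sInf_A hb]
      rw [pref]
      apply Finset.sum_eq_zero
      intro i hi
      have hi' := Finset.mem_range.mp hi
      rw [hz i (by omega)]
      simp
    · right
      push_neg at hz
      obtain ⟨i0, hi0m, hi0⟩ := hz
      set j := Nat.findGreatest (fun i => d i ≠ 0) m with hj
      have hjspec : d j ≠ 0 := Nat.findGreatest_spec (P := fun i => d i ≠ 0) hi0m hi0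
      have hjm : j ≤ m := Nat.findGreatest_le m
      have hjmax : ∀ i, j < i → i ≤ m → d i = 0 := by
        intro i h1 h2
        by_contra hne
        have := Nat.le_findGreatest (P := fun i => d i ≠ 0) h2 hne
        omega
      set d' := Function.update d j (d j - 1) with hd'
      have hgd' : Good l d' := by
        intro n
        rw [hd']
        rcases eq_or_ne n j with h | hne
        · rw [h, Function.update_self]; have := hd j; omega
        · rw [Function.update_of_ne hne]; exact hd n
      have hd'j : d' j < l := by
        rw [hd', Function.update_self]
        have h := hd j
        omega
      have hgap := isGap_of_spec hb hl2 d' j hgd' hd'j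
      have hglen := gap_len (l := l) hb d' j
      have hineq := gapratio_nonincr hb hl2 hjm
      have hend : pref b d' j + ((d' j : ℝ)+1) / (b:ℝ)^(j+1) = pref b d (m+1) := by
        have h1 : pref b d' j = pref b d j :=
          pref_congr j (fun i hi => by rw [hd', Function.update_of_ne (by omega)])
        have h1j : 1 ≤ d j := by omega
        have h2 : ((d' j : ℝ) + 1) = (d j : ℝ) := by
          rw [hd', Function.update_self, Nat.cast_sub h1j]
          push_cast
          ring
        rw [h1, h2, ← pref_succ]
        exact (pref_ext (by omega) (fun i hi1 hi2 => hjmax i (by omega) (by omega))).symm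
      refine ⟨pref b d' (j+1) + cst b l / (b:ℝ)^(j+1), ?_, ?_⟩
      · rw [hca]
        linarith
      · rw [hend] at hgap
        exact hgap
  · -- upper bound
    rintro t ⟨hta, h0 | ⟨s, hlen, hgap⟩⟩
    · rw [h0, sInf_A hb]
      exact pref_nonneg hb d (m+1)
    · obtain ⟨d'', m'', hgd'', hdm'', hs, ht⟩ := spec_of_isGap hb hl2 hgap
      have hlen' : t - s = (1 - cst b l) / (b:ℝ)^(m''+1) := by
        rw [hs, ht]; exact gap_len hb d'' m''
      rw [hca] at hlen
      have hm''m : m'' ≤ m := by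
        apply level_le_of_len_le hb hl2
        rw [← hlen']
        -- (1-cst)/b^(m+1) ≤ t - s = (1-cst)/b^(m''+1)
        exact le_trans hlen (le_refl _)
      -- t = val of gapv d'' m''
      have htval : t = val b (gapv d'' m'') := by
        rw [ht, val_gapv hb hgd'' hdm'']
      have hgw : Good l (gapv d'' m'') := good_gapv hgd'' hdm''
      have hgz : Good l (zext d (m+1)) := good_zext hd _
      have hvz : val b (zext d (m+1)) = pref b d (m+1) := val_zext hb hd _
      by_cases heq : gapv d'' m'' = zext d (m+1)
      · rw [htval, heq, hvz]
      · obtain ⟨j0, hj0, hagree⟩ := exists_min_diff heq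
        have hj0m : j0 ≤ m := by
          by_contra hgt
          apply hj0
          have h1 : gapv d'' m'' j0 = 0 := by
            simp only [gapv]
            rw [if_neg (by omega), if_neg (by omega)]
          have h2 : zext d (m+1) j0 = 0 := zext_of_ge (by omega)
          rw [h1, h2]
        rcases lt_or_gt_of_ne hj0 with hlt | hgt
        · have := sep hb hgw hgz hagree hlt
          have hpj : 0 < (1 - cst b l)/(b:ℝ)^(j0+1) :=
            div_pos (by linarith) (pow_pos (hbpos hb) _)
          rw [htval]
          linarith [hvz]
        · exfalso
          have hgu : Good l (lext l d (m+1)) := good_lext hd _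
          have hagree' : ∀ i < j0, lext l d (m+1) i = gapv d'' m'' i := by
            intro i hi
            rw [lext_of_lt (show i < m+1 by omega)]
            have h := hagree i hi
            rw [zext_of_lt (show i < m+1 by omega)] at h
            exact h.symm
          have hgt' : lext l d (m+1) j0 < gapv d'' m'' j0 := by
            rw [lext_of_lt (show j0 < m+1 by omega)]
            have h := hgt
            rw [zext_of_lt (show j0 < m+1 by omega)] at h
            exact h
          have := sep hb hgu hgw hagree' hgt'
          have hpj : 0 < (1 - cst b l)/(b:ℝ)^(j0+1) :=
            div_pos (by linarith) (pow_pos (hbpos hb) _)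
          have hva : val b (lext l d (m+1)) = a := by rw [val_lext' hb hd, ha]
          rw [htval] at hta
          linarith

/-- `rightPt` of the standard gap. -/
lemma rightPt_gap (hb : 2 < b) (hl1 : 1 ≤ l) (hl2 : l < b - 1) (d : ℕ → ℕ) (m : ℕ)
    (hd : Good l d) (hdm : d m < l) :
    rightPt (digitSet b {n : ℕ | n ≤ l})
      (pref b d (m+1) + cst b l / (b:ℝ)^(m+1))
      (pref b d m + ((d m : ℝ)+1) / (b:ℝ)^(m+1))
      = pref b d m + ((d m : ℝ)+1) / (b:ℝ)^(m+1) + cst b l / (b:ℝ)^(m+1) := by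
  have hp : (0:ℝ) < (b:ℝ)^(m+1) := pow_pos (hbpos hb) _
  have hc1 : cst b l < 1 := cst_lt_one hb hl2
  have hc0 : 0 < cst b l := cst_pos hb hl1
  set g := gapv d m with hgdef
  have hgg : Good l g := good_gapv hd hdm
  have hcval : val b g = pref b d m + ((d m : ℝ)+1) / (b:ℝ)^(m+1) := val_gapv hb hd hdm
  have hprefg : pref b g (m+1) = pref b d m + ((d m : ℝ)+1) / (b:ℝ)^(m+1) := by
    rw [pref_succ]
    have h1 : pref b g m = pref b d m :=
      pref_congr m (fun i hi => by simp only [hgdef, gapv]; rw [if_pos hi])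
    have h2 : g m = d m + 1 := by simp [hgdef, gapv]
    rw [h1, h2]
    push_cast; ring
  set a := pref b d (m+1) + cst b l / (b:ℝ)^(m+1) with ha
  set c := pref b d m + ((d m : ℝ)+1) / (b:ℝ)^(m+1) with hc
  clear_value a c
  have hca : c - a = (1 - cst b l) / (b:ℝ)^(m+1) := by rw [ha, hc]; exact gap_len hb d m
  have hcc0 : c ≤ c + cst b l / (b:ℝ)^(m+1) := by
    have : 0 ≤ cst b l / (b:ℝ)^(m+1) := by positivity
    linarith
  have hc0val : c + cst b l / (b:ℝ)^(m+1) = val b (lext l g (m+1)) := by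
    rw [val_lext' hb hgg, hprefg, hc]
  rw [rightPt]
  apply IsLeast.csInf_eq
  constructor
  · -- membership
    refine ⟨hcc0, ?_⟩
    by_cases hz : ∀ i, i ≤ m → g i = l
    · left
      rw [sSup_A hb, hc0val]
      have : lext l g (m+1) = (fun _ => l) := by
        funext i
        rcases lt_or_ge i (m+1) with hi | hi
        · rw [lext_of_lt hi, hz i (by omega)]
        · rw [lext_of_ge hi]
      rw [this, val, tsum_const_digit hb l, cst]
    · right
      push_neg at hz
      obtain ⟨i0, hi0m, hi0⟩ := hz
      set j := Nat.findGreatest (fun i => g i ≠ l) m with hj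
      have hjspec : g j ≠ l := Nat.findGreatest_spec (P := fun i => g i ≠ l) hi0m hi0
      have hjm : j ≤ m := Nat.findGreatest_le m
      have hjmax : ∀ i, j < i → i ≤ m → g i = l := by
        intro i h1 h2
        by_contra hne
        have := Nat.le_findGreatest (P := fun i => g i ≠ l) h2 hne
        omega
      have hgjl : g j < l := lt_of_le_of_ne (hgg j) hjspec
      have hgap := isGap_of_spec hb hl2 g j hgg hgjl
      have hlexteq : lext l g (m+1) = lext l g (j+1) := by
        funext i
        rcases lt_or_ge i (j+1) with hi | hi
        · rw [lext_of_lt hi, lext_of_lt (by omega)]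
        · rw [lext_of_ge hi]
          rcases lt_or_ge i (m+1) with hi2 | hi2
          · rw [lext_of_lt hi2, hjmax i (by omega) (by omega)]
          · rw [lext_of_ge hi2]
      have hc0eq : c + cst b l / (b:ℝ)^(m+1) = pref b g (j+1) + cst b l / (b:ℝ)^(j+1) := by
        rw [hc0val, hlexteq, val_lext' hb hgg]
      refine ⟨pref b g j + ((g j : ℝ)+1) / (b:ℝ)^(j+1), ?_, ?_⟩
      · have hgl := gap_len (l := l) hb g j
        have hineq := gapratio_nonincr hb hl2 hjm
        rw [hca, hc0eq]
        linarith
      · rw [hc0eq]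
        exact hgap
  · -- lower bound
    rintro t ⟨hct, h0 | ⟨f, hlen, hgap⟩⟩
    · rw [h0, sSup_A hb]
      have := (mem_bounds hb (val_mem _ (good_lext hgg (m+1)))).2
      rw [← hc0val] at this
      exact this
    · obtain ⟨d'', m'', hgd'', hdm'', hs, ht⟩ := spec_of_isGap hb hl2 hgap
      have hlen' : f - t = (1 - cst b l) / (b:ℝ)^(m''+1) := by
        rw [hs, ht]; exact gap_len hb d'' m''
      rw [hca] at hlen
      have hm''m : m'' ≤ m := by
        apply level_le_of_len_le hb hl2
        rw [← hlen']
        exact hlen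
      -- t = val of lext l d'' (m''+1)
      have htval : t = val b (lext l d'' (m''+1)) := by
        rw [hs, val_lext' hb hgd'']
      have hgw : Good l (lext l d'' (m''+1)) := good_lext hgd'' _
      have hgy : Good l (lext l g (m+1)) := good_lext hgg _
      by_cases heq : lext l d'' (m''+1) = lext l g (m+1)
      · rw [htval, heq, ← hc0val]
      · obtain ⟨j0, hj0, hagree⟩ := exists_min_diff heq
        have hj0m : j0 ≤ m := by
          by_contra hgt
          apply hj0
          rw [lext_of_ge (by omega), lext_of_ge (by omega)]
        rcases lt_or_gt_of_ne hj0 with hlt | hgt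
        · exfalso
          -- t < c, contradiction with c ≤ t
          have hagree' : ∀ i < j0, lext l d'' (m''+1) i = g i := by
            intro i hi
            rw [hagree i hi, lext_of_lt (by omega)]
          have hlt' : lext l d'' (m''+1) j0 < g j0 := by
            have h := hlt
            rw [lext_of_lt (show j0 < m+1 by omega)] at h
            exact h
          have := sep hb hgw hgg hagree' hlt'
          have hpj : 0 < (1 - cst b l)/(b:ℝ)^(j0+1) :=
            div_pos (by linarith) (pow_pos (hbpos hb) _)
          rw [htval] at hct
          rw [hcval] at this
          linarith
        · have := sep hb hgy hgw (fun i hi => (hagree i hi).symm) hgt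
          have hpj : 0 < (1 - cst b l)/(b:ℝ)^(j0+1) :=
            div_pos (by linarith) (pow_pos (hbpos hb) _)
          rw [htval, ← hc0val] at *
          linarith

end

section
variable {b l : ℕ}

lemma ratio_gap (hb : 2 < b) (hl1 : 1 ≤ l) (hl2 : l < b - 1) {a c : ℝ}
    (hgap : IsGap (digitSet b {n : ℕ | n ≤ l}) a c) :
    min (a - leftPt (digitSet b {n : ℕ | n ≤ l}) a c)
      (rightPt (digitSet b {n : ℕ | n ≤ l}) a c - c) / (c - a)
      = cst b l / (1 - cst b l) := by
  obtain ⟨d, m, hd, hdm, rfl, rfl⟩ := spec_of_isGap hb hl2 hgap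
  have hp : (0:ℝ) < (b:ℝ)^(m+1) := pow_pos (hbpos hb) _
  have hc1 : cst b l < 1 := cst_lt_one hb hl2
  have hc0 : 0 < cst b l := cst_pos hb hl1
  rw [leftPt_gap hb hl1 hl2 d m hd hdm, rightPt_gap hb hl1 hl2 d m hd hdm]
  have h1 : pref b d (m+1) + cst b l / (b:ℝ)^(m+1) - pref b d (m+1)
      = cst b l / (b:ℝ)^(m+1) := by ring
  have h2 : pref b d m + ((d m : ℝ)+1) / (b:ℝ)^(m+1) + cst b l / (b:ℝ)^(m+1)
      - (pref b d m + ((d m : ℝ)+1) / (b:ℝ)^(m+1)) = cst b l / (b:ℝ)^(m+1) := by ring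
  rw [h1, h2, min_self, gap_len hb d m]
  have hne1 : (1 : ℝ) - cst b l ≠ 0 := by linarith
  have hpne : ((b:ℝ)^(m+1)) ≠ 0 := ne_of_gt hp
  have hcne : cst b l ≠ 0 := ne_of_gt hc0
  field_simp

lemma exists_gap (hb : 2 < b) (hl1 : 1 ≤ l) (hl2 : l < b - 1) :
    IsGap (digitSet b {n : ℕ | n ≤ l})
      (pref b (fun _ => 0) (0+1) + cst b l / (b:ℝ)^(0+1))
      (pref b (fun _ => 0) 0 + (((fun _ => 0 : ℕ → ℕ) 0 : ℝ)+1) / (b:ℝ)^(0+1)) :=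
  isGap_of_spec hb hl2 (fun _ => 0) 0 (fun _ => Nat.zero_le l) (show (0:ℕ) < l by omega)

lemma thickness_A (hb : 2 < b) (hl1 : 1 ≤ l) (hl2 : l < b - 1) :
    thickness (digitSet b {n : ℕ | n ≤ l}) = cst b l / (1 - cst b l) := by
  rw [thickness]
  have hset : {r : ℝ | ∃ a c : ℝ, IsGap (digitSet b {n : ℕ | n ≤ l}) a c ∧
      r = min (a - leftPt (digitSet b {n : ℕ | n ≤ l}) a c)
        (rightPt (digitSet b {n : ℕ | n ≤ l}) a c - c) / (c - a)}
      = {cst b l / (1 - cst b l)} := by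
    ext r
    simp only [Set.mem_setOf_eq, Set.mem_singleton_iff]
    constructor
    · rintro ⟨a, c, hgap, rfl⟩
      exact ratio_gap hb hl1 hl2 hgap
    · rintro rfl
      exact ⟨_, _, exists_gap hb hl1 hl2, (ratio_gap hb hl1 hl2 (exists_gap hb hl1 hl2)).symm⟩
  rw [hset, csInf_singleton]

lemma cst_ratio (hb : 2 < b) (hl2 : l < b - 1) :
    cst b l / (1 - cst b l) = (l : ℝ) / ((b:ℝ) - 1 - (l:ℝ)) := by
  have h1 := hb1 (b := b) hb
  have hc1 : cst b l < 1 := cst_lt_one hb hl2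
  have hlb : (l:ℝ) < (b:ℝ) - 1 := by
    have : (l:ℝ) < ((b-1 : ℕ) : ℝ) := by exact_mod_cast hl2
    rw [Nat.cast_sub (by omega)] at this
    simpa using this
  have h2 : (0:ℝ) < (b:ℝ)-1 := by linarith
  have h3 : (0:ℝ) < (b:ℝ)-1-l := by linarith
  have hc1' : (0:ℝ) < 1 - cst b l := by linarith
  rw [cst] at hc1' ⊢
  rw [div_eq_div_iff (ne_of_gt hc1') (ne_of_gt h3)]
  field_simp

end

section
variable {b l : ℕ}

lemma compact_A (hb : 2 < b) : IsCompact (digitSet b {n : ℕ | n ≤ l}) := by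
  have hrange : digitSet b {n : ℕ | n ≤ l}
      = Set.range (fun d : ℕ → Fin (l+1) =>
          ∑' i : ℕ, (((d i : ℕ)) : ℝ) / (b:ℝ)^(i+1)) := by
    ext x
    constructor
    · rintro ⟨d, hd, rfl⟩
      exact ⟨fun i => ⟨d i, Nat.lt_succ_of_le (hd i)⟩, rfl⟩
    · rintro ⟨d, rfl⟩
      exact ⟨fun i => (d i : ℕ), fun i => Nat.lt_succ_iff.mp (d i).isLt, rfl⟩
  rw [hrange]
  apply isCompact_range
  apply continuous_tsum (u := fun i : ℕ => (l:ℝ) / (b:ℝ)^(i+1))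
  · intro i
    exact Continuous.div_const
      ((continuous_of_discreteTopology (α := Fin (l+1))
        (f := fun v : Fin (l+1) => ((v : ℕ) : ℝ))).comp (continuous_apply i)) _
  · exact summable_val hb (fun _ => l) (fun _ => le_rfl)
  · intro i d
    have h1 : (0:ℝ) < (b:ℝ)^(i+1) := pow_pos (hbpos hb) _
    rw [Real.norm_eq_abs, abs_of_nonneg (by positivity)]
    have h2 : ((d i : ℕ) : ℝ) ≤ (l : ℝ) := by
      exact_mod_cast Nat.lt_succ_iff.mp (d i).isLt
    exact div_le_div_of_nonneg_right h2 h1.le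

lemma exists_not_mem_between (hb : 2 < b) (hl1 : 1 ≤ l) (hl2 : l < b - 1) {x y : ℝ}
    (hx : x ∈ digitSet b {n : ℕ | n ≤ l}) (hxy : x < y) :
    ∃ z, x < z ∧ z < y ∧ z ∉ digitSet b {n : ℕ | n ≤ l} := by
  obtain ⟨u, hu', hxv⟩ := hx
  have hu : Good l u := hu'
  have hxv' : x = val b u := hxv
  subst hxv'
  have h1 := hb1 (b := b) hb
  have hinv : (b:ℝ)⁻¹ < 1 := by rw [inv_lt_one_iff₀]; right; exact h1
  obtain ⟨k, hk⟩ := exists_pow_lt_of_lt_one (sub_pos.mpr hxy) hinv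
  have hk' : 1 / (b:ℝ)^k < y - val b u := by
    have hip : ((b:ℝ)⁻¹)^k = 1 / (b:ℝ)^k := by rw [inv_pow, one_div]
    rw [hip] at hk
    exact hk
  have hp : (0:ℝ) < (b:ℝ)^k := pow_pos (hbpos hb) _
  have hc1 : cst b l < 1 := cst_lt_one hb hl2
  have hc0 : 0 < cst b l := cst_pos hb hl1
  refine ⟨pref b u k + (cst b l + (1 - cst b l)/2) / (b:ℝ)^k, ?_, ?_, ?_⟩
  · have hub := val_le_pref_add hb u hu k
    have h2 : cst b l / (b:ℝ)^k < (cst b l + (1 - cst b l)/2) / (b:ℝ)^k :=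
      (div_lt_div_iff_of_pos_right hp).mpr (by linarith)
    linarith
  · have hlb := pref_le_val hb u hu k
    have h2 : (cst b l + (1 - cst b l)/2) / (b:ℝ)^k < 1 / (b:ℝ)^k :=
      (div_lt_div_iff_of_pos_right hp).mpr (by linarith)
    linarith
  · rintro ⟨w, hw', hzw⟩
    have hw : Good l w := hw'
    have hzw' : pref b u k + (cst b l + (1 - cst b l)/2) / (b:ℝ)^k = val b w := hzw
    have hlb := pref_le_val hb w hw k
    have hub := val_le_pref_add hb w hw k
    have h2 : cst b l / (b:ℝ)^k < (cst b l + (1 - cst b l)/2) / (b:ℝ)^k :=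
      (div_lt_div_iff_of_pos_right hp).mpr (by linarith)
    have h3 : (cst b l + (1 - cst b l)/2) / (b:ℝ)^k < 1 / (b:ℝ)^k :=
      (div_lt_div_iff_of_pos_right hp).mpr (by linarith)
    have hne : pref b w k ≠ pref b u k := by
      intro hEq
      rw [hEq] at hub
      linarith
    have hspace := pref_spacing hb w u k hne
    rcases abs_cases (pref b w k - pref b u k) with ⟨hEq, _⟩ | ⟨hEq, _⟩ <;>
      rw [hEq] at hspace
    · -- pref w k ≥ pref u k + 1/b^k > z = val w ≥ pref w k
      linarith
    · -- pref w k ≤ pref u k - 1/b^k, val w ≤ pref w k + cst/b^k < pref u k < z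
      have h4 : cst b l / (b:ℝ)^k < 1 / (b:ℝ)^k :=
        (div_lt_div_iff_of_pos_right hp).mpr (by linarith)
      have h5 : 0 < (cst b l + (1 - cst b l)/2) / (b:ℝ)^k := div_pos (by linarith) hp
      linarith

lemma tdisc_A (hb : 2 < b) (hl1 : 1 ≤ l) (hl2 : l < b - 1) :
    IsTotallyDisconnected (digitSet b {n : ℕ | n ≤ l}) := by
  intro s hsA hs x hx y hy
  rcases lt_trichotomy x y with h | h | h
  · exfalso
    obtain ⟨z, h1, h2, h3⟩ := exists_not_mem_between hb hl1 hl2 (hsA hx) h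
    exact h3 (hsA ((hs.ordConnected.out hx hy) ⟨le_of_lt h1, le_of_lt h2⟩))
  · exact h
  · exfalso
    obtain ⟨z, h1, h2, h3⟩ := exists_not_mem_between hb hl1 hl2 (hsA hy) h
    exact h3 (hsA ((hs.ordConnected.out hy hx) ⟨le_of_lt h1, le_of_lt h2⟩))

lemma close_pair (hb : 2 < b) (hl2 : l < b - 1) {u v : ℕ → ℕ} {n : ℕ}
    (hu : Good l u) (hv : Good l v) (h : ∀ i < n, v i = u i) (hne : v n ≠ u n) :
    val b v ≠ val b u ∧ |val b v - val b u| ≤ cst b l / (b:ℝ)^n := by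
  constructor
  · rcases lt_or_gt_of_ne hne with hlt | hgt
    · exact ne_of_lt (val_lt_of_sep hb hl2 hv hu h hlt)
    · exact ne_of_gt (val_lt_of_sep hb hl2 hu hv (fun i hi => (h i hi).symm) hgt)
  · have hpc : pref b v n = pref b u n := pref_congr n h
    have h1 := pref_le_val hb v hv n
    have h2 := val_le_pref_add hb v hv n
    have h3 := pref_le_val hb u hu n
    have h4 := val_le_pref_add hb u hu n
    rw [abs_sub_le_iff]
    constructor <;> linarith

lemma acc_A (hb : 2 < b) (hl1 : 1 ≤ l) (hl2 : l < b - 1) :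
    ∀ x ∈ digitSet b {n : ℕ | n ≤ l},
      AccPt x (Filter.principal (digitSet b {n : ℕ | n ≤ l})) := by
  intro x hx
  rw [accPt_iff_nhds]
  intro U hU
  obtain ⟨ε, hε, hball⟩ := Metric.mem_nhds_iff.mp hU
  obtain ⟨u, hu', hxv⟩ := hx
  have hu : Good l u := hu'
  have hxv' : x = val b u := hxv
  subst hxv'
  have h1 := hb1 (b := b) hb
  have hc0 : 0 < cst b l := cst_pos hb hl1
  have hinv : (b:ℝ)⁻¹ < 1 := by rw [inv_lt_one_iff₀]; right; exact h1
  obtain ⟨n, hn⟩ := exists_pow_lt_of_lt_one (div_pos hε hc0) hinv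
  have hp : (0:ℝ) < (b:ℝ)^n := pow_pos (hbpos hb) _
  have hcb : cst b l / (b:ℝ)^n < ε := by
    have h2 := (lt_div_iff₀ hc0).mp hn
    calc cst b l / (b:ℝ)^n = ((b:ℝ)⁻¹)^n * cst b l := by rw [inv_pow]; ring
      _ < ε := h2
  have hgv : Good l (Function.update u n (if u n < l then u n + 1 else u n - 1)) := by
    intro i
    rcases eq_or_ne i n with h | hne
    · rw [h, Function.update_self]
      have := hu n
      split <;> omega
    · rw [Function.update_of_ne hne]; exact hu i
  have hagree : ∀ i < n, Function.update u n (if u n < l then u n + 1 else u n - 1) i = u i :=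
    fun i hi => Function.update_of_ne (by omega) _ _
  have hvn : Function.update u n (if u n < l then u n + 1 else u n - 1) n ≠ u n := by
    rw [Function.update_self]
    have := hu n
    split <;> omega
  obtain ⟨hne, habs⟩ := close_pair hb hl2 hu hgv hagree hvn
  refine ⟨val b (Function.update u n (if u n < l then u n + 1 else u n - 1)),
    ⟨?_, val_mem _ hgv⟩, hne⟩
  apply hball
  rw [Metric.mem_ball, Real.dist_eq]
  calc |val b (Function.update u n (if u n < l then u n + 1 else u n - 1)) - val b u|
      ≤ cst b l / (b:ℝ)^n := habs
    _ < ε := hcb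

end

end ThickAux

/-- For `b > 2`, `1 ≤ l < b - 1` and `B = {0, 1, …, l}`, the set `A_b^B` is a Cantor set with
thickness `l / (b - 1 - l)` and normalized thickness `l / (b - 1)`. -/
theorem thickness_digitSet_initial (b l : ℕ) (hb : 2 < b) (hl1 : 1 ≤ l) (hl2 : l < b - 1) :
    IsCantorSet (digitSet b {n : ℕ | n ≤ l}) ∧
    thickness (digitSet b {n : ℕ | n ≤ l}) = (l : ℝ) / ((b : ℝ) - 1 - (l : ℝ)) ∧
    normThickness (digitSet b {n : ℕ | n ≤ l}) = (l : ℝ) / ((b : ℝ) - 1) := by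
  have hth : thickness (digitSet b {n : ℕ | n ≤ l}) = (l : ℝ) / ((b : ℝ) - 1 - (l : ℝ)) := by
    rw [ThickAux.thickness_A hb hl1 hl2, ThickAux.cst_ratio hb hl2]
  refine ⟨⟨⟨0, ThickAux.zero_mem hb⟩, ThickAux.compact_A hb, ThickAux.tdisc_A hb hl1 hl2,
    ThickAux.acc_A hb hl1 hl2⟩, hth, ?_⟩
  rw [normThickness, hth]
  have h1 : (1:ℝ) < (b:ℝ) := ThickAux.hb1 hb
  have hlb : (l:ℝ) < (b:ℝ) - 1 := by
    have : (l:ℝ) < ((b-1 : ℕ) : ℝ) := by exact_mod_cast hl2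
    rw [Nat.cast_sub (by omega)] at this
    simpa using this
  have h3 : (0:ℝ) < (b:ℝ) - 1 - (l:ℝ) := by linarith
  have hl0 : (0:ℝ) < (l:ℝ) := by exact_mod_cast hl1
  have h2 : (0:ℝ) < (b:ℝ) - 1 := by linarith
  have h4 : (l:ℝ)/((b:ℝ)-1-(l:ℝ)) + 1 ≠ 0 := by
    have : 0 < (l:ℝ)/((b:ℝ)-1-(l:ℝ)) := div_pos hl0 h3
    linarith
  field_simp
  ring
end
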